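/- arXiv:1701.05144 — 3 statements merged into one kernel-verified Lean document; each statement's English description precedes it below -/
import Mathlib

section
/- For n ≥ 6, every edge of the double cone Γ_n contains a vertex of degree four, and every edge flip applied to Γ_n produces a triangulated 2-sphere containing a vertex of degree three, hence a triangulation that is not a flag 2-sphere. In particular, Γ_n is an isolated node of the Pachner graph 𝓕_n of n-vertex flag 2-spheres. -/
namespace PachnerSpheres

open Finset

/-- A triangulated 2-sphere on the vertex set `Fin n`, given by its set of
triangles: a pure 2-dimensional complex in which every edge lies in exactly two
triangles, all vertex links are connected (hence cycles), the complex is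
connected, and the Euler characteristic is 2. -/
structure Sphere2 (n : ℕ) where
  faces : Finset (Finset (Fin n))
  card_three : ∀ t ∈ faces, t.card = 3
  covers : ∀ v : Fin n, ∃ t ∈ faces, v ∈ t
  edge_two : ∀ t ∈ faces, ∀ e ⊆ t, e.card = 2 →
    (faces.filter fun t' => e ⊆ t').card = 2
  link_conn : ∀ v a b : Fin n,
    (∃ t ∈ faces, v ∈ t ∧ a ∈ t ∧ a ≠ v) →
    (∃ t ∈ faces, v ∈ t ∧ b ∈ t ∧ b ≠ v) →
    Relation.ReflTransGen
      (fun x y : Fin n => x ≠ y ∧ ({v, x, y} : Finset (Fin n)) ∈ faces) a b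
  conn : ∀ a b : Fin n,
    Relation.ReflTransGen
      (fun x y : Fin n => x ≠ y ∧ ∃ t ∈ faces, x ∈ t ∧ y ∈ t) a b
  euler : n + faces.card = (faces.biUnion fun t => t.powersetCard 2).card + 2

variable {n : ℕ}

namespace Sphere2

/-- The edges of a triangulated 2-sphere. -/
def edges (S : Sphere2 n) : Finset (Finset (Fin n)) :=
  S.faces.biUnion fun t => t.powersetCard 2

/-- `u` and `v` are joined by an edge of `S`. -/
def HasEdge (S : Sphere2 n) (u v : Fin n) : Prop :=
  u ≠ v ∧ ({u, v} : Finset (Fin n)) ∈ S.edges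

instance (S : Sphere2 n) : DecidableRel S.HasEdge := fun u v =>
  decidable_of_iff (u ≠ v ∧ ({u, v} : Finset (Fin n)) ∈ S.edges) Iff.rfl

/-- The degree of a vertex: the number of edges containing it. -/
def degree (S : Sphere2 n) (v : Fin n) : ℕ :=
  (S.edges.filter fun e => v ∈ e).card

/-- Combinatorial isomorphism of triangulated 2-spheres. -/
def Iso (S T : Sphere2 n) : Prop :=
  ∃ σ : Equiv.Perm (Fin n), T.faces = S.faces.image (Finset.image σ)

end Sphere2

/-- The face set obtained from `F` by the edge flip `ab ↦ cd`. -/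
def flipFaces (F : Finset (Finset (Fin n))) (a b c d : Fin n) :
    Finset (Finset (Fin n)) :=
  (F \ {{a, b, c}, {a, b, d}}) ∪ {{a, c, d}, {b, c, d}}

/-- `IsFlipOf S T a b c d` : `T` is obtained from `S` by the (admissible)
edge flip `ab ↦ cd`. -/
def IsFlipOf (S T : Sphere2 n) (a b c d : Fin n) : Prop :=
  c ≠ d ∧ ({a, b, c} : Finset (Fin n)) ∈ S.faces ∧
    ({a, b, d} : Finset (Fin n)) ∈ S.faces ∧ ¬ S.HasEdge c d ∧
    T.faces = flipFaces S.faces a b c d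

/-- `T` is obtained from `S` by a single edge flip. -/
def Flip (S T : Sphere2 n) : Prop := ∃ a b c d : Fin n, IsFlipOf S T a b c d

/-- A flag 2-sphere: distinct from the boundary of the tetrahedron (which is the
only triangulated 2-sphere with at most 4 vertices) and every 3-cycle of the
edge graph bounds a triangle. -/
def IsFlag (S : Sphere2 n) : Prop :=
  4 < n ∧ ∀ a b c : Fin n, S.HasEdge a b → S.HasEdge b c → S.HasEdge a c →
    ({a, b, c} : Finset (Fin n)) ∈ S.faces

/-- `S` is (isomorphic to) the double cone `Γ_n`: there are two non-adjacent
vertices such that every triangle contains one of them. -/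
def IsDoubleCone (S : Sphere2 n) : Prop :=
  ∃ v w : Fin n, v ≠ w ∧ ¬ S.HasEdge v w ∧ ∀ t ∈ S.faces, v ∈ t ∨ w ∈ t

/-- One step in the Pachner graph of `n`-vertex flag 2-spheres: an edge flip
between flag 2-spheres (in either direction), or a combinatorial isomorphism
(nodes are isomorphism classes). -/
def FlagStep (S T : Sphere2 n) : Prop :=
  IsFlag S ∧ IsFlag T ∧ (Flip S T ∨ Flip T S ∨ Sphere2.Iso S T)

/-- `S ∼ T` : `S` and `T` are connected in the Pachner graph of `n`-vertex flag
2-spheres, i.e. joined by a sequence of edge flips all whose intermediate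
triangulations are `n`-vertex flag 2-spheres. -/
def FlagConn (S T : Sphere2 n) : Prop := Relation.ReflTransGen FlagStep S T

/-! ### Quadrilaterals in triangulated 2-spheres -/

/-- The boundary edges of a subcomplex `Q` (given by a set of triangles):
the edges lying in exactly one triangle of `Q`. -/
def bdryEdges (Q : Finset (Finset (Fin n))) : Finset (Finset (Fin n)) :=
  (Q.biUnion fun t => t.powersetCard 2).filter fun e =>
    (Q.filter fun t => e ⊆ t).card = 1

/-- The edge set of the 4-cycle `a-b-c-d-a`. -/
def quadCycle (a b c d : Fin n) : Finset (Finset (Fin n)) :=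
  {{a, b}, {b, c}, {c, d}, {d, a}}

/-- `Q` is a quadrilateral in `T` with boundary 4-cycle `a-b-c-d-a`: a
subcomplex of `T` which is a triangulated disc whose boundary is the 4-cycle
`a-b-c-d-a` (connected, with boundary edges exactly the 4-cycle). -/
def IsQuad (T : Sphere2 n) (Q : Finset (Finset (Fin n))) (a b c d : Fin n) :
    Prop :=
  Q ⊆ T.faces ∧ Q.Nonempty ∧ [a, b, c, d].Pairwise (· ≠ ·) ∧
  bdryEdges Q = quadCycle a b c d ∧
  ∀ s ∈ Q, ∀ t ∈ Q,
    Relation.ReflTransGen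
      (fun x y : Finset (Fin n) => x ∈ Q ∧ y ∈ Q ∧ (x ∩ y).card = 2) s t

/-- The interior vertices of a quadrilateral with boundary vertices
`a, b, c, d`. -/
def quadInterior (Q : Finset (Finset (Fin n))) (a b c d : Fin n) :
    Finset (Fin n) :=
  Q.biUnion id \ {a, b, c, d}

/-- An ordered quadrilateral: it has interior vertices, and all interior
vertices have degree four (in the ambient sphere). -/
def IsOrderedQuad (T : Sphere2 n) (Q : Finset (Finset (Fin n)))
    (a b c d : Fin n) : Prop :=
  IsQuad T Q a b c d ∧ (quadInterior Q a b c d).Nonempty ∧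
    ∀ v ∈ quadInterior Q a b c d, T.degree v = 4

/-- A proper quadrilateral: its boundary 4-cycle `a-b-c-d-a` is induced in `T`
and all four boundary vertices have degree at least five. -/
def IsProperQuad (T : Sphere2 n) (Q : Finset (Finset (Fin n)))
    (a b c d : Fin n) : Prop :=
  IsQuad T Q a b c d ∧ ¬ T.HasEdge a c ∧ ¬ T.HasEdge b d ∧
    5 ≤ T.degree a ∧ 5 ≤ T.degree b ∧ 5 ≤ T.degree c ∧ 5 ≤ T.degree d

/-- The diagonal path of the ordered quadrilateral `Q` has an endpoint at the
boundary vertex `v`: exactly one interior vertex of `Q` is adjacent to `v`. -/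
def DiagEndAt (T : Sphere2 n) (Q : Finset (Finset (Fin n))) (a b c d : Fin n)
    (v : Fin n) : Prop :=
  v ∈ ({a, b, c, d} : Finset (Fin n)) ∧
    ∃! u : Fin n, u ∈ quadInterior Q a b c d ∧ T.HasEdge v u

/-! ### Stacked 3-balls and stacked 2-spheres -/

/-- A stacked 3-ball, given by its set of tetrahedra: obtained from a single
tetrahedron by repeatedly gluing a new tetrahedron (with a fresh apex) onto a
boundary triangle. -/
inductive IsStackedBall : Finset (Finset (Fin n)) → Prop
  | single (t : Finset (Fin n)) (ht : t.card = 4) : IsStackedBall {t}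
  | glue (B : Finset (Finset (Fin n))) (t : Finset (Fin n)) (x : Fin n)
      (hB : IsStackedBall B) (ht : t.card = 3)
      (hbd : (B.filter fun τ => t ⊆ τ).card = 1)
      (hx : ∀ τ ∈ B, x ∉ τ) :
      IsStackedBall (insert (insert x t) B)

/-- The boundary triangles of a complex `B` given by a set of tetrahedra:
the triangles lying in exactly one tetrahedron of `B`. -/
def bdry (B : Finset (Finset (Fin n))) : Finset (Finset (Fin n)) :=
  (B.biUnion fun τ => τ.powersetCard 3).filter fun s =>
    (B.filter fun τ => s ⊆ τ).card = 1

/-- A stacked 2-sphere: a triangulated 2-sphere which is the boundary of a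
stacked 3-ball. -/
def IsStacked (S : Sphere2 n) : Prop :=
  ∃ B : Finset (Finset (Fin n)), IsStackedBall B ∧ S.faces = bdry B

/-- The degree of the node `σ` in the dual graph `Λ(B)` of `B`: the number of
tetrahedra of `B` sharing a triangle with `σ`. -/
def dualDeg (B : Finset (Finset (Fin n))) (σ : Finset (Fin n)) : ℕ :=
  (B.filter fun τ => τ ≠ σ ∧ (τ ∩ σ).card = 3).card

/-- One step in the Pachner graph `𝓢_n` of `n`-vertex stacked 2-spheres. -/
def StackedStep (S T : Sphere2 n) : Prop :=
  IsStacked S ∧ IsStacked T ∧ (Flip S T ∨ Flip T S ∨ Sphere2.Iso S T)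

/-- Connectivity in the Pachner graph `𝓢_n` of `n`-vertex stacked 2-spheres. -/
def StackedConn (S T : Sphere2 n) : Prop := Relation.ReflTransGen StackedStep S T

/-- One step in the dual graph `Λ(B)` with the node `σ` deleted. -/
def DualStepAvoiding (B : Finset (Finset (Fin n))) (σ : Finset (Fin n))
    (x y : Finset (Fin n)) : Prop :=
  x ∈ B ∧ y ∈ B ∧ x ≠ σ ∧ y ≠ σ ∧ x ≠ y ∧ (x ∩ y).card = 3

/-- Reachability in the dual graph `Λ(B)` with the node `σ` deleted. -/
def DualReachAvoiding (B : Finset (Finset (Fin n))) (σ x y : Finset (Fin n)) :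
    Prop :=
  Relation.ReflTransGen (DualStepAvoiding B σ) x y

/-- One step (adjacency) in the dual graph `Λ(B)`. -/
def DualStep (B : Finset (Finset (Fin n))) (x y : Finset (Fin n)) : Prop :=
  x ∈ B ∧ y ∈ B ∧ x ≠ y ∧ (x ∩ y).card = 3

/-- The dual graph `Λ(B)` is a path: connected, all degrees at most two, and
some node of degree at most one. -/
def DualIsPath (B : Finset (Finset (Fin n))) : Prop :=
  (∀ σ ∈ B, dualDeg B σ ≤ 2) ∧
  (∀ σ ∈ B, ∀ τ ∈ B, Relation.ReflTransGen (DualStep B) σ τ) ∧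
  (∃ σ ∈ B, dualDeg B σ ≤ 1)

/-- `S` belongs to `𝓢ₙ⁰`: `S` is a stacked 2-sphere whose (unique) stacked
3-ball has a dual graph with no node of degree four. -/
def NoDeg4 (S : Sphere2 n) : Prop :=
  IsStacked S ∧ ∀ B : Finset (Finset (Fin n)), IsStackedBall B →
    S.faces = bdry B → ∀ σ ∈ B, dualDeg B σ ≠ 4

/-- One step in the Pachner graph `𝓢ₙ⁰`. -/
def Step0 (S T : Sphere2 n) : Prop :=
  NoDeg4 S ∧ NoDeg4 T ∧ (Flip S T ∨ Flip T S ∨ Sphere2.Iso S T)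

/-- Reachability between vertices in the subcomplex of `B` induced on the
vertices outside `t`. -/
def inducedReach (B : Finset (Finset (Fin n))) (t : Finset (Fin n))
    (x y : Fin n) : Prop :=
  Relation.ReflTransGen
    (fun u v : Fin n => u ≠ v ∧ u ∉ t ∧ v ∉ t ∧ ∃ τ ∈ B, u ∈ τ ∧ v ∈ τ) x y

/-- The tetrahedra of the clique complex of the edge graph of `S`:
all 4-cliques of the edge graph. -/
def cliqueTets (S : Sphere2 n) : Finset (Finset (Fin n)) :=
  (Finset.univ.powersetCard 4).filter fun τ =>
    ∀ u ∈ τ, ∀ v ∈ τ, u ≠ v → S.HasEdge u v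

/-! ### Trees with maximum node-degree four, and counting components -/

/-- Trees on `m` nodes with all node-degrees at most four. -/
abbrev DegLe4Tree (m : ℕ) : Type :=
  {G : SimpleGraph (Fin m) // G.IsTree ∧ ∀ v, (G.neighborSet v).ncard ≤ 4}

/-- Trees up to graph isomorphism. -/
def treeSetoid (m : ℕ) : Setoid (DegLe4Tree m) :=
  Relation.EqvGen.setoid fun G H => Nonempty (G.1 ≃g H.1)

/-- `t(m)`: the number of isomorphism classes of trees on `m` nodes with
maximum node-degree at most four. -/
noncomputable def numDeg4Trees (m : ℕ) : ℕ := Nat.card (Quotient (treeSetoid m))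

/-- Stacked 2-spheres modulo connectivity in the Pachner graph `𝓢_n`
(nodes of `𝓢_n` are isomorphism classes, arcs are edge flips). -/
def stackedSetoid (n : ℕ) : Setoid {S : Sphere2 n // IsStacked S} :=
  Relation.EqvGen.setoid fun S T => Flip S.1 T.1 ∨ Sphere2.Iso S.1 T.1

/-- The number of connected components of the Pachner graph `𝓢_n` of
`n`-vertex stacked 2-spheres. -/
noncomputable def numStackedComponents (n : ℕ) : ℕ := Nat.card (Quotient (stackedSetoid n))


/-! ### Auxiliary lemmas for `double_cone_isolated` -/

section Aux

variable {n : ℕ}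

lemma aux_mem_edges_iff (S : Sphere2 n) {e : Finset (Fin n)} :
    e ∈ S.edges ↔ ∃ t ∈ S.faces, e ⊆ t ∧ e.card = 2 := by
  simp [Sphere2.edges, Finset.mem_powersetCard]

lemma aux_edge_card (S : Sphere2 n) {e : Finset (Fin n)} (he : e ∈ S.edges) :
    e.card = 2 := by
  obtain ⟨t, _, _, h⟩ := (aux_mem_edges_iff S).1 he
  exact h

lemma aux_pair_subset {t : Finset (Fin n)} {p q : Fin n} (hp : p ∈ t) (hq : q ∈ t) :
    ({p, q} : Finset (Fin n)) ⊆ t := by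
  intro x hx
  simp only [Finset.mem_insert, Finset.mem_singleton] at hx
  rcases hx with rfl | rfl <;> assumption

lemma aux_hasEdge (S : Sphere2 n) {t : Finset (Fin n)} (ht : t ∈ S.faces)
    {p q : Fin n} (hp : p ∈ t) (hq : q ∈ t) (hpq : p ≠ q) : S.HasEdge p q :=
  ⟨hpq, (aux_mem_edges_iff S).2 ⟨t, ht, aux_pair_subset hp hq, Finset.card_pair hpq⟩⟩

lemma aux_pair_elt {e : Finset (Fin n)} {u : Fin n} (hc : e.card = 2) (hu : u ∈ e) :
    ∃ p, p ≠ u ∧ e = {u, p} := by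
  have hsub : ({u} : Finset (Fin n)) ⊆ e := Finset.singleton_subset_iff.2 hu
  have h1 : (e \ {u}).card = 1 := by
    rw [Finset.card_sdiff_of_subset hsub, hc, Finset.card_singleton]
  obtain ⟨p, hp⟩ := Finset.card_eq_one.1 h1
  have hpm : p ∈ e \ {u} := by rw [hp]; exact Finset.mem_singleton_self p
  have hpu : p ≠ u := by
    have := (Finset.mem_sdiff.1 hpm).2; simpa using this
  refine ⟨p, hpu, ?_⟩
  have := Finset.union_sdiff_of_subset hsub
  rw [hp] at this
  rw [← this]
  ext x; simp [or_comm]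

lemma aux_third_elt {t : Finset (Fin n)} {u v : Fin n} (ht : t.card = 3)
    (hu : u ∈ t) (hv : v ∈ t) (huv : u ≠ v) :
    ∃ x, x ≠ u ∧ x ≠ v ∧ t = {u, v, x} := by
  have hsub : ({u, v} : Finset (Fin n)) ⊆ t := aux_pair_subset hu hv
  have h1 : (t \ {u, v}).card = 1 := by
    rw [Finset.card_sdiff_of_subset hsub, ht, Finset.card_pair huv]
  obtain ⟨x, hx⟩ := Finset.card_eq_one.1 h1
  have hxm : x ∈ t \ {u, v} := by rw [hx]; exact Finset.mem_singleton_self x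
  have hx2 := (Finset.mem_sdiff.1 hxm).2
  simp only [Finset.mem_insert, Finset.mem_singleton] at hx2
  push_neg at hx2
  refine ⟨x, hx2.1, hx2.2, ?_⟩
  have := Finset.union_sdiff_of_subset hsub
  rw [hx] at this
  rw [← this]
  ext p; simp

lemma aux_second_face (S : Sphere2 n) {t e : Finset (Fin n)} (ht : t ∈ S.faces)
    (he : e ⊆ t) (hc : e.card = 2) :
    ∃ t', t' ∈ S.faces ∧ t' ≠ t ∧ e ⊆ t' := by
  have h2 := S.edge_two t ht e he hc
  have htm : t ∈ S.faces.filter fun t' => e ⊆ t' := Finset.mem_filter.2 ⟨ht, he⟩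
  have hpos : 0 < ((S.faces.filter fun t' => e ⊆ t').erase t).card := by
    rw [Finset.card_erase_of_mem htm, h2]; norm_num
  obtain ⟨t', ht'⟩ := Finset.card_pos.1 hpos
  have h := Finset.mem_erase.1 ht'
  have h2' := Finset.mem_filter.1 h.2
  exact ⟨t', h2'.1, h.1, h2'.2⟩

lemma aux_third_face (S : Sphere2 n) {s1 s2 e : Finset (Fin n)}
    (hs1 : s1 ∈ S.faces) (hs2 : s2 ∈ S.faces) (hne : s1 ≠ s2)
    (he1 : e ⊆ s1) (he2 : e ⊆ s2) (hc : e.card = 2) :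
    ∀ t ∈ S.faces, e ⊆ t → t = s1 ∨ t = s2 := by
  intro t ht het
  have h2 := S.edge_two s1 hs1 e he1 hc
  have hsub : ({s1, s2} : Finset (Finset (Fin n))) ⊆ S.faces.filter fun t' => e ⊆ t' := by
    intro x hx
    simp only [Finset.mem_insert, Finset.mem_singleton] at hx
    rcases hx with rfl | rfl
    · exact Finset.mem_filter.2 ⟨hs1, he1⟩
    · exact Finset.mem_filter.2 ⟨hs2, he2⟩
  have heq : ({s1, s2} : Finset (Finset (Fin n))) = S.faces.filter fun t' => e ⊆ t' :=
    Finset.eq_of_subset_of_card_le hsub (by rw [h2, Finset.card_pair hne])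
  have : t ∈ ({s1, s2} : Finset (Finset (Fin n))) := by
    rw [heq]; exact Finset.mem_filter.2 ⟨ht, het⟩
  simpa using this

lemma aux_tri_ne {a b c : Fin n} (h : ({a, b, c} : Finset (Fin n)).card = 3) :
    a ≠ b ∧ a ≠ c ∧ b ≠ c := by
  refine ⟨?_, ?_, ?_⟩ <;> rintro rfl
  · have hsub : ({a, a, c} : Finset (Fin n)) ⊆ {a, c} := by
      intro p hp; simp at hp ⊢; tauto
    have h1 := Finset.card_le_card hsub
    have h2 : ({a, c} : Finset (Fin n)).card ≤ 2 :=
      (Finset.card_insert_le _ _).trans (by simp)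
    omega
  · have hsub : ({a, b, a} : Finset (Fin n)) ⊆ {a, b} := by
      intro p hp; simp at hp ⊢; tauto
    have h1 := Finset.card_le_card hsub
    have h2 : ({a, b} : Finset (Fin n)).card ≤ 2 :=
      (Finset.card_insert_le _ _).trans (by simp)
    omega
  · have hsub : ({a, b, b} : Finset (Fin n)) ⊆ {a, b} := by
      intro p hp; simp at hp ⊢; tauto
    have h1 := Finset.card_le_card hsub
    have h2 : ({a, b} : Finset (Fin n)).card ≤ 2 :=
      (Finset.card_insert_le _ _).trans (by simp)
    omega

lemma aux_pair_ne {u p q : Fin n} (hpu : p ≠ u) (hpq : p ≠ q) :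
    ({u, p} : Finset (Fin n)) ≠ {u, q} := by
  intro h
  have : p ∈ ({u, q} : Finset (Fin n)) := by rw [← h]; simp
  simp at this; tauto

end Aux

section Cone

variable {n : ℕ} {S : Sphere2 n} {v w : Fin n}

lemma aux_no_both (hvw : v ≠ w) (hE : ¬ S.HasEdge v w) :
    ∀ t ∈ S.faces, ¬ (v ∈ t ∧ w ∈ t) := by
  rintro t ht ⟨hv, hw⟩
  exact hE (aux_hasEdge S ht hv hw hvw)

lemma aux_common_aux (hnb : ∀ t ∈ S.faces, ¬ (v ∈ t ∧ w ∈ t))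
    (hcone : ∀ t ∈ S.faces, v ∈ t ∨ w ∈ t)
    {t : Finset (Fin n)} (ht : t ∈ S.faces) {u : Fin n} (hu : u ∈ t) (hv : v ∈ t)
    (huv : u ≠ v) (huw : u ≠ w) :
    ∃ x, x ≠ u ∧ x ≠ v ∧ x ≠ w ∧ ({u, v, x} : Finset (Fin n)) ∈ S.faces ∧
      ({u, w, x} : Finset (Fin n)) ∈ S.faces := by
  obtain ⟨x, hxu, hxv, rfl⟩ := aux_third_elt (S.card_three t ht) hu hv huv
  have hwt : w ∉ ({u, v, x} : Finset (Fin n)) := fun hw => hnb _ ht ⟨hv, hw⟩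
  have hxw : x ≠ w := by rintro rfl; exact hwt (by simp)
  have hsub : ({u, x} : Finset (Fin n)) ⊆ {u, v, x} :=
    aux_pair_subset (by simp) (by simp)
  obtain ⟨t', ht', htne, hsub'⟩ :=
    aux_second_face S ht hsub (Finset.card_pair (Ne.symm hxu))
  have hut' : u ∈ t' := hsub' (by simp)
  have hxt' : x ∈ t' := hsub' (by simp)
  obtain ⟨y, hyu, hyx, rfl⟩ :=
    aux_third_elt (S.card_three t' ht') hut' hxt' (Ne.symm hxu)
  rcases hcone _ ht' with hvt' | hwt'
  · exfalso
    have hvy : v = y := by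
      simp only [Finset.mem_insert, Finset.mem_singleton] at hvt'
      rcases hvt' with h | h | h
      · exact absurd h.symm huv
      · exact absurd h.symm hxv
      · exact h
    subst hvy
    exact htne (by ext p; simp; tauto)
  · have hwy : w = y := by
      simp only [Finset.mem_insert, Finset.mem_singleton] at hwt'
      rcases hwt' with h | h | h
      · exact absurd h.symm huw
      · exact absurd h.symm hxw
      · exact h
    subst hwy
    refine ⟨x, hxu, hxv, hxw, ht, ?_⟩
    have he : ({u, w, x} : Finset (Fin n)) = {u, x, w} := by ext p; simp; tauto
    rw [he]; exact ht'

lemma aux_common (hvw : v ≠ w) (hnb : ∀ t ∈ S.faces, ¬ (v ∈ t ∧ w ∈ t))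
    (hcone : ∀ t ∈ S.faces, v ∈ t ∨ w ∈ t)
    {u : Fin n} (huv : u ≠ v) (huw : u ≠ w) :
    ∃ x, x ≠ u ∧ x ≠ v ∧ x ≠ w ∧ ({u, v, x} : Finset (Fin n)) ∈ S.faces ∧
      ({u, w, x} : Finset (Fin n)) ∈ S.faces := by
  obtain ⟨t, ht, hu⟩ := S.covers u
  rcases hcone t ht with hv | hw
  · exact aux_common_aux hnb hcone ht hu hv huv huw
  · have hnb' : ∀ t ∈ S.faces, ¬ (w ∈ t ∧ v ∈ t) := fun t ht h => hnb t ht ⟨h.2, h.1⟩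
    have hcone' : ∀ t ∈ S.faces, w ∈ t ∨ v ∈ t := fun t ht => (hcone t ht).symm
    obtain ⟨x, h1, h2, h3, h4, h5⟩ := aux_common_aux hnb' hcone' ht hu hw huw huv
    exact ⟨x, h1, h3, h2, h5, h4⟩

lemma aux_cone_degree (hvw : v ≠ w) (hnb : ∀ t ∈ S.faces, ¬ (v ∈ t ∧ w ∈ t))
    (hcone : ∀ t ∈ S.faces, v ∈ t ∨ w ∈ t)
    {u : Fin n} (huv : u ≠ v) (huw : u ≠ w) :
    S.degree u = 4 := by
  obtain ⟨x1, hx1u, hx1v, hx1w, hf1, hf2⟩ := aux_common hvw hnb hcone huv huw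
  have hsubuv : ({u, v} : Finset (Fin n)) ⊆ {u, v, x1} :=
    aux_pair_subset (by simp) (by simp)
  obtain ⟨g, hg, hgne, hgsub⟩ := aux_second_face S hf1 hsubuv (Finset.card_pair huv)
  have hug : u ∈ g := hgsub (by simp)
  have hvg : v ∈ g := hgsub (by simp)
  obtain ⟨x2, hx2u, hx2v, rfl⟩ := aux_third_elt (S.card_three g hg) hug hvg huv
  have hf3 : ({u, v, x2} : Finset (Fin n)) ∈ S.faces := hg
  have hx2w : x2 ≠ w := by rintro rfl; exact hnb _ hg ⟨hvg, by simp⟩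
  have hx21 : x2 ≠ x1 := by rintro rfl; exact hgne rfl
  have hx12 : x1 ≠ x2 := Ne.symm hx21
  -- the second face over the edge {u, x2} is {u, w, x2}
  have hf4 : ({u, w, x2} : Finset (Fin n)) ∈ S.faces := by
    have hsubux2 : ({u, x2} : Finset (Fin n)) ⊆ {u, v, x2} :=
      aux_pair_subset (by simp) (by simp)
    obtain ⟨g2, hg2, hg2ne, hg2sub⟩ :=
      aux_second_face S hf3 hsubux2 (Finset.card_pair (Ne.symm hx2u))
    have hug2 : u ∈ g2 := hg2sub (by simp)
    have hx2g2 : x2 ∈ g2 := hg2sub (by simp)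
    obtain ⟨y, hyu, hyx2, rfl⟩ :=
      aux_third_elt (S.card_three g2 hg2) hug2 hx2g2 (Ne.symm hx2u)
    rcases hcone _ hg2 with hv2 | hw2
    · exfalso
      have hvy : v = y := by
        simp only [Finset.mem_insert, Finset.mem_singleton] at hv2
        rcases hv2 with h | h | h
        · exact absurd h.symm huv
        · exact absurd h.symm hx2v
        · exact h
      subst hvy
      exact hg2ne (by ext p; simp; tauto)
    · have hwy : w = y := by
        simp only [Finset.mem_insert, Finset.mem_singleton] at hw2
        rcases hw2 with h | h | h
        · exact absurd h.symm huw
        · exact absurd h.symm hx2w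
        · exact h
      subst hwy
      have he : ({u, w, x2} : Finset (Fin n)) = {u, x2, w} := by ext p; simp; tauto
      rw [he]; exact hg2
  -- the distinctness facts
  have hf1ne3 : ({u, v, x1} : Finset (Fin n)) ≠ {u, v, x2} := by
    intro hh
    have : x1 ∈ ({u, v, x2} : Finset (Fin n)) := by rw [← hh]; simp
    simp at this
    rcases this with h | h | h
    exacts [hx1u h, hx1v h, hx12 h]
  have hf2ne4 : ({u, w, x1} : Finset (Fin n)) ≠ {u, w, x2} := by
    intro hh
    have : x1 ∈ ({u, w, x2} : Finset (Fin n)) := by rw [← hh]; simp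
    simp at this
    rcases this with h | h | h
    exacts [hx1u h, hx1w h, hx12 h]
  -- compute the set of edges at u
  have key : (S.edges.filter fun e => u ∈ e) =
      {{u, v}, {u, w}, {u, x1}, {u, x2}} := by
    ext e
    simp only [Finset.mem_filter, Finset.mem_insert, Finset.mem_singleton]
    constructor
    · rintro ⟨he, hue⟩
      obtain ⟨t, ht, hsub, hc2⟩ := (aux_mem_edges_iff S).1 he
      obtain ⟨p, hpu, rfl⟩ := aux_pair_elt hc2 hue
      have hpt : p ∈ t := hsub (by simp)
      have hut : u ∈ t := hsub (by simp)
      rcases hcone t ht with hvt | hwt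
      · by_cases hpv : p = v
        · subst hpv; left; rfl
        · obtain ⟨q, hqu, hqv, rfl⟩ := aux_third_elt (S.card_three t ht) hut hvt huv
          have hpq : p = q := by
            simp only [Finset.mem_insert, Finset.mem_singleton] at hpt
            rcases hpt with h | h | h
            · exact absurd h hpu
            · exact absurd h hpv
            · exact h
          subst hpq
          have hsubt : ({u, v} : Finset (Fin n)) ⊆ {u, v, p} :=
            aux_pair_subset (by simp) (by simp)
          rcases aux_third_face S hf1 hf3 hf1ne3 hsubuv
              (aux_pair_subset (by simp) (by simp)) (Finset.card_pair huv)
              _ ht hsubt with h | h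
          · have : p ∈ ({u, v, x1} : Finset (Fin n)) := by rw [← h]; simp
            simp at this
            rcases this with h' | h' | h'
            · exact absurd h' hpu
            · exact absurd h' hpv
            · right; right; left; rw [h']
          · have : p ∈ ({u, v, x2} : Finset (Fin n)) := by rw [← h]; simp
            simp at this
            rcases this with h' | h' | h'
            · exact absurd h' hpu
            · exact absurd h' hpv
            · right; right; right; rw [h']
      · by_cases hpw : p = w
        · subst hpw; right; left; rfl
        · obtain ⟨q, hqu, hqw, rfl⟩ := aux_third_elt (S.card_three t ht) hut hwt huw
          have hpq : p = q := by
            simp only [Finset.mem_insert, Finset.mem_singleton] at hpt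
            rcases hpt with h | h | h
            · exact absurd h hpu
            · exact absurd h hpw
            · exact h
          subst hpq
          have hsubt : ({u, w} : Finset (Fin n)) ⊆ {u, w, p} :=
            aux_pair_subset (by simp) (by simp)
          rcases aux_third_face S hf2 hf4 hf2ne4
              (aux_pair_subset (by simp) (by simp))
              (aux_pair_subset (by simp) (by simp)) (Finset.card_pair huw)
              _ ht hsubt with h | h
          · have : p ∈ ({u, w, x1} : Finset (Fin n)) := by rw [← h]; simp
            simp at this
            rcases this with h' | h' | h'
            · exact absurd h' hpu
            · exact absurd h' hpw
            · right; right; left; rw [h']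
          · have : p ∈ ({u, w, x2} : Finset (Fin n)) := by rw [← h]; simp
            simp at this
            rcases this with h' | h' | h'
            · exact absurd h' hpu
            · exact absurd h' hpw
            · right; right; right; rw [h']
    · rintro (rfl | rfl | rfl | rfl)
      · exact ⟨(aux_mem_edges_iff S).2 ⟨_, hf1, aux_pair_subset (by simp) (by simp),
          Finset.card_pair huv⟩, by simp⟩
      · exact ⟨(aux_mem_edges_iff S).2 ⟨_, hf2, aux_pair_subset (by simp) (by simp),
          Finset.card_pair huw⟩, by simp⟩
      · exact ⟨(aux_mem_edges_iff S).2 ⟨_, hf1, aux_pair_subset (by simp) (by simp),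
          Finset.card_pair (Ne.symm hx1u)⟩, by simp⟩
      · exact ⟨(aux_mem_edges_iff S).2 ⟨_, hf3, aux_pair_subset (by simp) (by simp),
          Finset.card_pair (Ne.symm hx2u)⟩, by simp⟩
  show (S.edges.filter fun e => u ∈ e).card = 4
  rw [key]
  rw [Finset.card_insert_of_notMem (by
        simp only [Finset.mem_insert, Finset.mem_singleton]
        push_neg
        exact ⟨aux_pair_ne (Ne.symm huv) hvw, aux_pair_ne (Ne.symm huv) (Ne.symm hx1v),
          aux_pair_ne (Ne.symm huv) (Ne.symm hx2v)⟩),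
      Finset.card_insert_of_notMem (by
        simp only [Finset.mem_insert, Finset.mem_singleton]
        push_neg
        exact ⟨aux_pair_ne (Ne.symm huw) (Ne.symm hx1w),
          aux_pair_ne (Ne.symm huw) (Ne.symm hx2w)⟩),
      Finset.card_insert_of_notMem (by
        simp only [Finset.mem_singleton]
        exact aux_pair_ne hx1u hx12),
      Finset.card_singleton]

end Cone

section FlipAux

variable {n : ℕ}

lemma aux_mem_flipFaces {F : Finset (Finset (Fin n))} {a b c d : Fin n}
    {t : Finset (Fin n)} :
    t ∈ flipFaces F a b c d ↔
      (t ∈ F ∧ t ≠ {a, b, c} ∧ t ≠ {a, b, d}) ∨ t = {a, c, d} ∨ t = {b, c, d} := by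
  simp only [flipFaces, Finset.mem_union, Finset.mem_sdiff, Finset.mem_insert,
    Finset.mem_singleton]
  tauto

lemma aux_tri_ne3 {a b c d : Fin n} (hac : a ≠ c) (hbc : b ≠ c) (hcd : c ≠ d) :
    ({a, b, c} : Finset (Fin n)) ≠ {a, b, d} := by
  intro hh
  have : c ∈ ({a, b, d} : Finset (Fin n)) := by rw [← hh]; simp
  simp at this
  rcases this with h | h | h
  exacts [hac h.symm, hbc h.symm, hcd h]

lemma aux_flip_symm {S T : Sphere2 n} {a b c d : Fin n} (h : IsFlipOf S T a b c d) :
    IsFlipOf S T b a c d := by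
  obtain ⟨hcd, habc, habd, hE, hT⟩ := h
  have e1 : ({b, a, c} : Finset (Fin n)) = {a, b, c} := by ext p; simp; tauto
  have e2 : ({b, a, d} : Finset (Fin n)) = {a, b, d} := by ext p; simp; tauto
  refine ⟨hcd, by rw [e1]; exact habc, by rw [e2]; exact habd, hE, ?_⟩
  rw [hT]
  ext t
  rw [aux_mem_flipFaces, aux_mem_flipFaces, e1, e2]
  tauto

lemma aux_flip_edges (S T : Sphere2 n) (a b c d : Fin n) (h : IsFlipOf S T a b c d) :
    (T.edges.filter fun e => a ∈ e) =
      ((S.edges.filter fun e => a ∈ e)).erase {a, b} := by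
  obtain ⟨hcd, habc, habd, hE, hT⟩ := h
  obtain ⟨hab, hac, hbc⟩ := aux_tri_ne (S.card_three _ habc)
  obtain ⟨-, had, hbd⟩ := aux_tri_ne (S.card_three _ habd)
  have hfne : ({a, b, c} : Finset (Fin n)) ≠ {a, b, d} := aux_tri_ne3 hac hbc hcd
  have habs1 : ({a, b} : Finset (Fin n)) ⊆ {a, b, c} :=
    aux_pair_subset (by simp) (by simp)
  have habs2 : ({a, b} : Finset (Fin n)) ⊆ {a, b, d} :=
    aux_pair_subset (by simp) (by simp)
  have hthird := aux_third_face S habc habd hfne habs1 habs2 (Finset.card_pair hab)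
  ext e
  simp only [Finset.mem_filter, Finset.mem_erase]
  constructor
  · rintro ⟨heT, hae⟩
    obtain ⟨t, ht, hsub, hc2⟩ := (aux_mem_edges_iff T).1 heT
    rw [hT, aux_mem_flipFaces] at ht
    obtain ⟨p, hpa, rfl⟩ := aux_pair_elt hc2 hae
    rcases ht with ⟨htS, h1, h2⟩ | rfl | rfl
    · refine ⟨?_, (aux_mem_edges_iff S).2 ⟨t, htS, hsub, hc2⟩, by simp⟩
      intro hh
      rw [hh] at hsub
      rcases hthird t htS hsub with rfl | rfl
      · exact h1 rfl
      · exact h2 rfl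
    · have hp : p ∈ ({a, c, d} : Finset (Fin n)) := hsub (by simp)
      simp at hp
      rcases hp with h | h | h
      · exact absurd h hpa
      · subst h
        refine ⟨aux_pair_ne (Ne.symm hac) (Ne.symm hbc), ?_, by simp⟩
        exact (aux_mem_edges_iff S).2 ⟨_, habc, aux_pair_subset (by simp) (by simp),
          Finset.card_pair hac⟩
      · subst h
        refine ⟨aux_pair_ne (Ne.symm had) (Ne.symm hbd), ?_, by simp⟩
        exact (aux_mem_edges_iff S).2 ⟨_, habd, aux_pair_subset (by simp) (by simp),
          Finset.card_pair had⟩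
    · have ha' : a ∈ ({b, c, d} : Finset (Fin n)) := hsub (by simp)
      simp at ha'
      rcases ha' with h | h | h
      exacts [absurd h hab, absurd h hac, absurd h had]
  · rintro ⟨hne, heS, hae⟩
    refine ⟨?_, hae⟩
    obtain ⟨t, ht, hsub, hc2⟩ := (aux_mem_edges_iff S).1 heS
    obtain ⟨p, hpa, rfl⟩ := aux_pair_elt hc2 hae
    by_cases h1 : t = {a, b, c}
    · subst h1
      have hp : p ∈ ({a, b, c} : Finset (Fin n)) := hsub (by simp)
      simp at hp
      rcases hp with h | h | h
      · exact absurd h hpa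
      · subst h; exact absurd rfl hne
      · rw [h]
        have hacd : ({a, c, d} : Finset (Fin n)) ∈ T.faces := by
          rw [hT, aux_mem_flipFaces]; right; left; rfl
        exact (aux_mem_edges_iff T).2 ⟨_, hacd,
          aux_pair_subset (by simp) (by simp), Finset.card_pair hac⟩
    · by_cases h2 : t = {a, b, d}
      · subst h2
        have hp : p ∈ ({a, b, d} : Finset (Fin n)) := hsub (by simp)
        simp at hp
        rcases hp with h | h | h
        · exact absurd h hpa
        · subst h; exact absurd rfl hne
        · rw [h]
          have hacd : ({a, c, d} : Finset (Fin n)) ∈ T.faces := by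
            rw [hT, aux_mem_flipFaces]; right; left; rfl
          exact (aux_mem_edges_iff T).2 ⟨_, hacd,
            aux_pair_subset (by simp) (by simp), Finset.card_pair had⟩
      · exact (aux_mem_edges_iff T).2 ⟨t,
          by rw [hT, aux_mem_flipFaces]; exact Or.inl ⟨ht, h1, h2⟩, hsub, hc2⟩

lemma aux_flip_degree {S T : Sphere2 n} {a b c d : Fin n} (h : IsFlipOf S T a b c d)
    (h4 : S.degree a = 4) : T.degree a = 3 := by
  have hkey := aux_flip_edges S T a b c d h
  obtain ⟨hcd, habc, habd, hE, hT⟩ := h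
  obtain ⟨hab, hac, hbc⟩ := aux_tri_ne (S.card_three _ habc)
  have hmem : ({a, b} : Finset (Fin n)) ∈ S.edges.filter fun e => a ∈ e :=
    Finset.mem_filter.2 ⟨(aux_mem_edges_iff S).2 ⟨_, habc,
      aux_pair_subset (by simp) (by simp), Finset.card_pair hab⟩, by simp⟩
  have h4' : (S.edges.filter fun e => a ∈ e).card = 4 := h4
  show (T.edges.filter fun e => a ∈ e).card = 3
  rw [hkey, Finset.card_erase_of_mem hmem, h4']

lemma aux_flip_reverse {S T : Sphere2 n} {a b c d : Fin n}
    (h : IsFlipOf T S a b c d) : IsFlipOf S T c d a b := by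
  obtain ⟨hcd, habc, habd, hE, hS⟩ := h
  obtain ⟨hab, hac, hbc⟩ := aux_tri_ne (T.card_three _ habc)
  obtain ⟨-, had, hbd⟩ := aux_tri_ne (T.card_three _ habd)
  have hfne : ({a, b, c} : Finset (Fin n)) ≠ {a, b, d} := aux_tri_ne3 hac hbc hcd
  have e1 : ({c, d, a} : Finset (Fin n)) = {a, c, d} := by ext p; simp; tauto
  have e2 : ({c, d, b} : Finset (Fin n)) = {b, c, d} := by ext p; simp; tauto
  have e3 : ({c, a, b} : Finset (Fin n)) = {a, b, c} := by ext p; simp; tauto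
  have e4 : ({d, a, b} : Finset (Fin n)) = {a, b, d} := by ext p; simp; tauto
  have hSm : ∀ t : Finset (Fin n), t ∈ S.faces ↔
      (t ∈ T.faces ∧ t ≠ {a, b, c} ∧ t ≠ {a, b, d}) ∨ t = {a, c, d} ∨ t = {b, c, d} :=
    fun t => by rw [hS]; exact aux_mem_flipFaces
  refine ⟨hab, ?_, ?_, ?_, ?_⟩
  · rw [e1]; exact (hSm _).2 (Or.inr (Or.inl rfl))
  · rw [e2]; exact (hSm _).2 (Or.inr (Or.inr rfl))
  · rintro ⟨-, habE⟩
    obtain ⟨t, ht, hsub, -⟩ := (aux_mem_edges_iff S).1 habE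
    rcases (hSm t).1 ht with ⟨htT, h1, h2⟩ | rfl | rfl
    · rcases aux_third_face T habc habd hfne (aux_pair_subset (by simp) (by simp))
        (aux_pair_subset (by simp) (by simp)) (Finset.card_pair hab) t htT hsub with
        rfl | rfl
      · exact h1 rfl
      · exact h2 rfl
    · have : b ∈ ({a, c, d} : Finset (Fin n)) := hsub (by simp)
      simp at this
      rcases this with h | h | h
      exacts [hab h.symm, hbc h, hbd h]
    · have : a ∈ ({b, c, d} : Finset (Fin n)) := hsub (by simp)
      simp at this
      rcases this with h | h | h
      exacts [hab h, hac h, had h]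
  · ext t
    rw [aux_mem_flipFaces]
    constructor
    · intro htT
      by_cases h1 : t = {a, b, c}
      · subst h1; right; left; exact e3.symm
      · by_cases h2 : t = {a, b, d}
        · subst h2; right; right; exact e4.symm
        · left
          refine ⟨(hSm t).2 (Or.inl ⟨htT, h1, h2⟩), ?_, ?_⟩
          · rw [e1]; rintro rfl
            exact hE (aux_hasEdge T htT (by simp) (by simp) hcd)
          · rw [e2]; rintro rfl
            exact hE (aux_hasEdge T htT (by simp) (by simp) hcd)
    · rintro (⟨htS, h1, h2⟩ | rfl | rfl)
      · rcases (hSm t).1 htS with ⟨htT, -, -⟩ | rfl | rfl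
        · exact htT
        · exact absurd e1.symm h1
        · exact absurd e2.symm h2
      · rw [e3]; exact habc
      · rw [e4]; exact habd

end FlipAux

section FlagAux

variable {n : ℕ}

lemma aux_faces_in_K (T : Sphere2 n) (K : Finset (Fin n)) (hK : K.card = 4)
    (hf : ∀ s, s ⊆ K → s.card = 3 → s ∈ T.faces) :
    ∀ t ∈ T.faces, ∀ p ∈ t, p ∈ K → t ⊆ K := by
  have hedge : ∀ e, e ⊆ K → e.card = 2 → ∀ t ∈ T.faces, e ⊆ t → t ⊆ K := by
    intro e heK hec t ht het
    have hsd : (K \ e).card = 2 := by rw [Finset.card_sdiff_of_subset heK, hK, hec]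
    obtain ⟨r1, r2, hr12, hKe⟩ := Finset.card_eq_two.1 hsd
    have hr1 : r1 ∈ K \ e := by rw [hKe]; simp
    have hr2 : r2 ∈ K \ e := by rw [hKe]; simp
    have hr1K := (Finset.mem_sdiff.1 hr1).1
    have hr1e := (Finset.mem_sdiff.1 hr1).2
    have hr2K := (Finset.mem_sdiff.1 hr2).1
    have hr2e := (Finset.mem_sdiff.1 hr2).2
    have hs1K : insert r1 e ⊆ K := Finset.insert_subset hr1K heK
    have hs2K : insert r2 e ⊆ K := Finset.insert_subset hr2K heK
    have hs1 := hf _ hs1K (by rw [Finset.card_insert_of_notMem hr1e, hec])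
    have hs2 := hf _ hs2K (by rw [Finset.card_insert_of_notMem hr2e, hec])
    have hne : insert r1 e ≠ insert r2 e := by
      intro hh
      have : r1 ∈ insert r2 e := by rw [← hh]; simp
      simp only [Finset.mem_insert] at this
      rcases this with h | h
      · exact hr12 h
      · exact hr1e h
    rcases aux_third_face T hs1 hs2 hne (Finset.subset_insert _ _)
      (Finset.subset_insert _ _) hec t ht het with rfl | rfl
    · exact hs1K
    · exact hs2K
  intro t ht p hpt hpK
  by_cases hq : ∃ q ∈ t, q ∈ K ∧ q ≠ p
  · obtain ⟨q, hqt, hqK, hqp⟩ := hq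
    exact hedge {p, q} (aux_pair_subset hpK hqK) (Finset.card_pair (Ne.symm hqp))
      t ht (aux_pair_subset hpt hqt)
  · exfalso
    push_neg at hq
    have h3 := T.card_three t ht
    have hpos : 0 < (t.erase p).card := by
      rw [Finset.card_erase_of_mem hpt, h3]; norm_num
    obtain ⟨r, hr⟩ := Finset.card_pos.1 hpos
    have hrp := (Finset.mem_erase.1 hr).1
    have hrt := (Finset.mem_erase.1 hr).2
    have hrK : r ∉ K := fun hh => hrp (hq r hrt hh)
    have hpos2 : 0 < (K.erase p).card := by
      rw [Finset.card_erase_of_mem hpK, hK]; norm_num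
    obtain ⟨q', hq'⟩ := Finset.card_pos.1 hpos2
    have hq'p := (Finset.mem_erase.1 hq').1
    have hq'K := (Finset.mem_erase.1 hq').2
    have hpos3 : 0 < ((K.erase p).erase q').card := by
      rw [Finset.card_erase_of_mem hq', Finset.card_erase_of_mem hpK, hK]; norm_num
    obtain ⟨y, hy⟩ := Finset.card_pos.1 hpos3
    have hyq' := (Finset.mem_erase.1 hy).1
    have hyp := (Finset.mem_erase.1 (Finset.mem_erase.1 hy).2).1
    have hyK := (Finset.mem_erase.1 (Finset.mem_erase.1 hy).2).2
    have hs0K : K.erase y ⊆ K := Finset.erase_subset _ _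
    have hs0 := hf _ hs0K (by rw [Finset.card_erase_of_mem hyK, hK])
    have hps0 : p ∈ K.erase y := Finset.mem_erase.2 ⟨Ne.symm hyp, hpK⟩
    have hq's0 : q' ∈ K.erase y := Finset.mem_erase.2 ⟨Ne.symm hyq', hq'K⟩
    have hpath := T.link_conn p r q' ⟨t, ht, hpt, hrt, hrp⟩
      ⟨K.erase y, hs0, hps0, hq's0, hq'p⟩
    have inv : ∀ {x z : Fin n},
        Relation.ReflTransGen
          (fun x y : Fin n => x ≠ y ∧ ({p, x, y} : Finset (Fin n)) ∈ T.faces) x z →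
        x ∉ K → z ∉ K := by
      intro x z hxz
      induction hxz with
      | refl => exact id
      | @tail b c hab hbc ih =>
        intro hx
        have hbK := ih hx
        obtain ⟨hbc', hface⟩ := hbc
        intro hcK
        obtain ⟨hpb, hpc, -⟩ := aux_tri_ne (T.card_three _ hface)
        have htK : ({p, b, c} : Finset (Fin n)) ⊆ K :=
          hedge {p, c} (aux_pair_subset hpK hcK) (Finset.card_pair hpc)
            _ hface (aux_pair_subset (by simp) (by simp))
        exact hbK (htK (by simp))
    exact inv hpath hrK hq'K

lemma aux_deg3_not_flag (T : Sphere2 n) (z : Fin n) (h3 : T.degree z = 3) :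
    ¬ IsFlag T := by
  rintro ⟨hn4, hflag⟩
  have h3' : (T.edges.filter fun e => z ∈ e).card = 3 := h3
  obtain ⟨e1, e2, e3, h12, h13, h23, hE⟩ := Finset.card_eq_three.1 h3'
  have he1 : e1 ∈ T.edges ∧ z ∈ e1 := by
    have : e1 ∈ T.edges.filter fun e => z ∈ e := by rw [hE]; simp
    exact Finset.mem_filter.1 this
  have he2 : e2 ∈ T.edges ∧ z ∈ e2 := by
    have : e2 ∈ T.edges.filter fun e => z ∈ e := by rw [hE]; simp
    exact Finset.mem_filter.1 this
  have he3 : e3 ∈ T.edges ∧ z ∈ e3 := by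
    have : e3 ∈ T.edges.filter fun e => z ∈ e := by rw [hE]; simp
    exact Finset.mem_filter.1 this
  obtain ⟨x1, hx1z, hx1e⟩ := aux_pair_elt (aux_edge_card T he1.1) he1.2
  obtain ⟨x2, hx2z, hx2e⟩ := aux_pair_elt (aux_edge_card T he2.1) he2.2
  obtain ⟨x3, hx3z, hx3e⟩ := aux_pair_elt (aux_edge_card T he3.1) he3.2
  have hx12 : x1 ≠ x2 := by rintro rfl; apply h12; rw [hx1e, hx2e]
  have hx13 : x1 ≠ x3 := by rintro rfl; apply h13; rw [hx1e, hx3e]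
  have hx23 : x2 ≠ x3 := by rintro rfl; apply h23; rw [hx2e, hx3e]
  have hnbr : ∀ p, T.HasEdge z p → p = x1 ∨ p = x2 ∨ p = x3 := by
    rintro p ⟨hzp, hpE⟩
    have hm : ({z, p} : Finset (Fin n)) ∈ T.edges.filter fun e => z ∈ e :=
      Finset.mem_filter.2 ⟨hpE, by simp⟩
    rw [hE] at hm
    simp only [Finset.mem_insert, Finset.mem_singleton] at hm
    rcases hm with h | h | h
    · left
      rw [hx1e] at h
      have : p ∈ ({z, x1} : Finset (Fin n)) := by rw [← h]; simp
      simp at this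
      rcases this with h' | h'
      · exact absurd h'.symm hzp
      · exact h'
    · right; left
      rw [hx2e] at h
      have : p ∈ ({z, x2} : Finset (Fin n)) := by rw [← h]; simp
      simp at this
      rcases this with h' | h'
      · exact absurd h'.symm hzp
      · exact h'
    · right; right
      rw [hx3e] at h
      have : p ∈ ({z, x3} : Finset (Fin n)) := by rw [← h]; simp
      simp at this
      rcases this with h' | h'
      · exact absurd h'.symm hzp
      · exact h'
  have hfz : ∀ t ∈ T.faces, z ∈ t → ∀ p ∈ t, p = z ∨ p = x1 ∨ p = x2 ∨ p = x3 := by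
    intro t ht hzt p hpt
    by_cases hpz : p = z
    · exact Or.inl hpz
    · exact Or.inr (hnbr p (aux_hasEdge T ht hzt hpt (fun hh => hpz hh.symm)))
  have two_faces : ∀ i : Fin n, i ≠ z → ({z, i} : Finset (Fin n)) ∈ T.edges →
      ∃ s s', s ≠ s' ∧ s ≠ z ∧ s ≠ i ∧ s' ≠ z ∧ s' ≠ i ∧
        ({z, i, s} : Finset (Fin n)) ∈ T.faces ∧
        ({z, i, s'} : Finset (Fin n)) ∈ T.faces := by
    intro i hiz hiE
    obtain ⟨t, ht, hsub, -⟩ := (aux_mem_edges_iff T).1 hiE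
    have hzt : z ∈ t := hsub (by simp)
    have hit : i ∈ t := hsub (by simp)
    obtain ⟨s, hsz, hsi, rfl⟩ := aux_third_elt (T.card_three t ht) hzt hit (Ne.symm hiz)
    have hsub2 : ({z, i} : Finset (Fin n)) ⊆ {z, i, s} :=
      aux_pair_subset (by simp) (by simp)
    obtain ⟨t', ht', htne, hsub'⟩ :=
      aux_second_face T ht hsub2 (Finset.card_pair (Ne.symm hiz))
    obtain ⟨s', hs'z, hs'i, rfl⟩ :=
      aux_third_elt (T.card_three t' ht') (hsub' (by simp)) (hsub' (by simp))
        (Ne.symm hiz)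
    have hss' : s ≠ s' := by rintro rfl; exact htne rfl
    exact ⟨s, s', hss', hsz, hsi, hs'z, hs'i, ht, ht'⟩
  have getAB : ∀ i j k : Fin n, i ≠ z → ({z, i} : Finset (Fin n)) ∈ T.edges →
      (∀ s : Fin n, ({z, i, s} : Finset (Fin n)) ∈ T.faces → s ≠ z → s ≠ i →
        s = j ∨ s = k) →
      ({z, i, j} : Finset (Fin n)) ∈ T.faces ∧
        ({z, i, k} : Finset (Fin n)) ∈ T.faces := by
    intro i j k hiz hiE hcases
    obtain ⟨s, s', hss', hsz, hsi, hs'z, hs'i, hfs, hfs'⟩ := two_faces i hiz hiE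
    rcases hcases s hfs hsz hsi with rfl | rfl <;>
      rcases hcases s' hfs' hs'z hs'i with rfl | rfl
    · exact absurd rfl hss'
    · exact ⟨hfs, hfs'⟩
    · exact ⟨hfs', hfs⟩
    · exact absurd rfl hss'
  have hx1E : ({z, x1} : Finset (Fin n)) ∈ T.edges := by rw [← hx1e]; exact he1.1
  have hx2E : ({z, x2} : Finset (Fin n)) ∈ T.edges := by rw [← hx2e]; exact he2.1
  have hAB := getAB x1 x2 x3 hx1z hx1E (by
    intro s hfs hsz hsx1
    rcases hfz _ hfs (by simp) s (by simp) with h | h | h | h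
    · exact absurd h hsz
    · exact absurd h hsx1
    · exact Or.inl h
    · exact Or.inr h)
  have hC := (getAB x2 x1 x3 hx2z hx2E (by
    intro s hfs hsz hsx2
    rcases hfz _ hfs (by simp) s (by simp) with h | h | h | h
    · exact absurd h hsz
    · exact Or.inl h
    · exact absurd h hsx2
    · exact Or.inr h)).2
  have hA := hAB.1
  have hB := hAB.2
  have hD : ({x1, x2, x3} : Finset (Fin n)) ∈ T.faces :=
    hflag x1 x2 x3 (aux_hasEdge T hA (by simp) (by simp) hx12)
      (aux_hasEdge T hC (by simp) (by simp) hx23)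
      (aux_hasEdge T hB (by simp) (by simp) hx13)
  have hzK : z ∉ ({x1, x2, x3} : Finset (Fin n)) := by
    simp only [Finset.mem_insert, Finset.mem_singleton]
    push_neg
    exact ⟨Ne.symm hx1z, Ne.symm hx2z, Ne.symm hx3z⟩
  have hK4 : (insert z ({x1, x2, x3} : Finset (Fin n))).card = 4 := by
    rw [Finset.card_insert_of_notMem hzK,
      Finset.card_insert_of_notMem (by
        simp only [Finset.mem_insert, Finset.mem_singleton]
        push_neg
        exact ⟨hx12, hx13⟩),
      Finset.card_pair hx23]
  have h3sub : ∀ s, s ⊆ insert z ({x1, x2, x3} : Finset (Fin n)) → s.card = 3 →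
      s ∈ T.faces := by
    intro s hsK hsc
    have hsd : ((insert z ({x1, x2, x3} : Finset (Fin n))) \ s).card = 1 := by
      rw [Finset.card_sdiff_of_subset hsK, hK4, hsc]
    obtain ⟨y, hy⟩ := Finset.card_eq_one.1 hsd
    have hym : y ∈ (insert z ({x1, x2, x3} : Finset (Fin n))) \ s := by
      rw [hy]; simp
    have hyK := (Finset.mem_sdiff.1 hym).1
    have hys := (Finset.mem_sdiff.1 hym).2
    have hseq : s = (insert z ({x1, x2, x3} : Finset (Fin n))).erase y := by
      apply Finset.eq_of_subset_of_card_le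
      · intro p hp
        exact Finset.mem_erase.2 ⟨fun hh => hys (hh ▸ hp), hsK hp⟩
      · rw [Finset.card_erase_of_mem hyK, hK4, hsc]
    rw [hseq]
    simp only [Finset.mem_insert, Finset.mem_singleton] at hyK
    rcases hyK with h | h | h | h
    · rw [h, Finset.erase_insert hzK]; exact hD
    · have herase : (insert z ({x1, x2, x3} : Finset (Fin n))).erase x1 =
          ({z, x2, x3} : Finset (Fin n)) := by
        ext p
        simp only [Finset.mem_erase, Finset.mem_insert, Finset.mem_singleton]
        constructor
        · rintro ⟨hp1, hp2⟩
          rcases hp2 with h2 | h2 | h2 | h2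
          · exact Or.inl h2
          · exact absurd h2 hp1
          · exact Or.inr (Or.inl h2)
          · exact Or.inr (Or.inr h2)
        · intro hp
          rcases hp with h2 | h2 | h2
          · refine ⟨?_, Or.inl h2⟩; rw [h2]; exact Ne.symm hx1z
          · refine ⟨?_, Or.inr (Or.inr (Or.inl h2))⟩; rw [h2]; exact Ne.symm hx12
          · refine ⟨?_, Or.inr (Or.inr (Or.inr h2))⟩; rw [h2]; exact Ne.symm hx13
      rw [h, herase]; exact hC
    · have herase : (insert z ({x1, x2, x3} : Finset (Fin n))).erase x2 =
          ({z, x1, x3} : Finset (Fin n)) := by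
        ext p
        simp only [Finset.mem_erase, Finset.mem_insert, Finset.mem_singleton]
        constructor
        · rintro ⟨hp1, hp2⟩
          rcases hp2 with h2 | h2 | h2 | h2
          · exact Or.inl h2
          · exact Or.inr (Or.inl h2)
          · exact absurd h2 hp1
          · exact Or.inr (Or.inr h2)
        · intro hp
          rcases hp with h2 | h2 | h2
          · refine ⟨?_, Or.inl h2⟩; rw [h2]; exact Ne.symm hx2z
          · refine ⟨?_, Or.inr (Or.inl h2)⟩; rw [h2]; exact hx12
          · refine ⟨?_, Or.inr (Or.inr (Or.inr h2))⟩; rw [h2]; exact Ne.symm hx23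
      rw [h, herase]; exact hB
    · have herase : (insert z ({x1, x2, x3} : Finset (Fin n))).erase x3 =
          ({z, x1, x2} : Finset (Fin n)) := by
        ext p
        simp only [Finset.mem_erase, Finset.mem_insert, Finset.mem_singleton]
        constructor
        · rintro ⟨hp1, hp2⟩
          rcases hp2 with h2 | h2 | h2 | h2
          · exact Or.inl h2
          · exact Or.inr (Or.inl h2)
          · exact Or.inr (Or.inr h2)
          · exact absurd h2 hp1
        · intro hp
          rcases hp with h2 | h2 | h2
          · refine ⟨?_, Or.inl h2⟩; rw [h2]; exact Ne.symm hx3z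
          · refine ⟨?_, Or.inr (Or.inl h2)⟩; rw [h2]; exact hx13
          · refine ⟨?_, Or.inr (Or.inr (Or.inl h2))⟩; rw [h2]; exact hx23
      rw [h, herase]; exact hA
  have hKfaces := aux_faces_in_K T _ hK4 h3sub
  have hp0 : ∃ p0 : Fin n, p0 ∉ insert z ({x1, x2, x3} : Finset (Fin n)) := by
    by_contra hh
    push_neg at hh
    have hsub : (Finset.univ : Finset (Fin n)) ⊆
        insert z ({x1, x2, x3} : Finset (Fin n)) := fun p _ => hh p
    have hle := Finset.card_le_card hsub
    rw [Finset.card_univ, Fintype.card_fin, hK4] at hle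
    omega
  obtain ⟨p0, hp0K⟩ := hp0
  have inv : ∀ {x y : Fin n},
      Relation.ReflTransGen
        (fun x y : Fin n => x ≠ y ∧ ∃ t ∈ T.faces, x ∈ t ∧ y ∈ t) x y →
      x ∉ insert z ({x1, x2, x3} : Finset (Fin n)) →
      y ∉ insert z ({x1, x2, x3} : Finset (Fin n)) := by
    intro x y hxy
    induction hxy with
    | refl => exact id
    | @tail b c hab hbc ih =>
      intro hx
      have hbK := ih hx
      obtain ⟨hbc', t, ht, hbt, hct⟩ := hbc
      intro hcK
      exact hbK (hKfaces t ht c hct hcK hbt)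
  exact inv (T.conn p0 z) hp0K (by simp)

end FlagAux

/-- For `n ≥ 6`, every edge of the double cone `Γ_n` contains
a vertex of degree four; every edge flip on `Γ_n` produces a triangulated
2-sphere with a vertex of degree three, hence not a flag 2-sphere; in
particular `Γ_n` is an isolated node of the Pachner graph `𝓕_n`. -/
theorem double_cone_isolated (n : ℕ) (hn : 6 ≤ n) (S : Sphere2 n)
    (hS : IsDoubleCone S) :
    (∀ e ∈ S.edges, ∃ v ∈ e, S.degree v = 4) ∧
    (∀ (T : Sphere2 n) (a b c d : Fin n), IsFlipOf S T a b c d →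
      (∃ v : Fin n, T.degree v = 3) ∧ ¬ IsFlag T) ∧
    (∀ T : Sphere2 n, IsFlag T → ¬ Flip S T ∧ ¬ Flip T S) := by
  obtain ⟨v, w, hvw, hE, hcone⟩ := hS
  have hnb : ∀ t ∈ S.faces, ¬ (v ∈ t ∧ w ∈ t) := aux_no_both hvw hE
  have hdeg : ∀ u : Fin n, u ≠ v → u ≠ w → S.degree u = 4 := fun u h1 h2 =>
    aux_cone_degree hvw hnb hcone h1 h2
  have part1 : ∀ e ∈ S.edges, ∃ z ∈ e, S.degree z = 4 := by
    intro e he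
    obtain ⟨t, ht, hsub, hc2⟩ := (aux_mem_edges_iff S).1 he
    obtain ⟨p, q, hpq, rfl⟩ := Finset.card_eq_two.1 hc2
    by_cases hp : p ≠ v ∧ p ≠ w
    · exact ⟨p, by simp, hdeg p hp.1 hp.2⟩
    · have hpvw : p = v ∨ p = w := by tauto
      have hq1 : q ≠ v := by
        rintro rfl
        rcases hpvw with rfl | rfl
        · exact hpq rfl
        · exact hnb t ht ⟨hsub (by simp), hsub (by simp)⟩
      have hq2 : q ≠ w := by
        rintro rfl
        rcases hpvw with rfl | rfl
        · exact hnb t ht ⟨hsub (by simp), hsub (by simp)⟩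
        · exact hpq rfl
      exact ⟨q, by simp, hdeg q hq1 hq2⟩
  have part2 : ∀ (T : Sphere2 n) (a b c d : Fin n), IsFlipOf S T a b c d →
      (∃ z : Fin n, T.degree z = 3) ∧ ¬ IsFlag T := by
    intro T a b c d hflip
    have habc := hflip.2.1
    obtain ⟨hab, hac, hbc⟩ := aux_tri_ne (S.card_three _ habc)
    have hz : ∃ z : Fin n, T.degree z = 3 := by
      by_cases ha : a ≠ v ∧ a ≠ w
      · exact ⟨a, aux_flip_degree hflip (hdeg a ha.1 ha.2)⟩
      · have havw : a = v ∨ a = w := by tauto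
        have hb1 : b ≠ v := by
          rintro rfl
          rcases havw with rfl | rfl
          · exact hab rfl
          · exact hnb _ habc ⟨by simp, by simp⟩
        have hb2 : b ≠ w := by
          rintro rfl
          rcases havw with rfl | rfl
          · exact hnb _ habc ⟨by simp, by simp⟩
          · exact hab rfl
        exact ⟨b, aux_flip_degree (aux_flip_symm hflip) (hdeg b hb1 hb2)⟩
    obtain ⟨z, hz3⟩ := hz
    exact ⟨⟨z, hz3⟩, aux_deg3_not_flag T z hz3⟩
  refine ⟨part1, part2, ?_⟩
  intro T hTflag
  constructor
  · rintro ⟨a, b, c, d, hf⟩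
    exact (part2 T a b c d hf).2 hTflag
  · rintro ⟨a, b, c, d, hf⟩
    exact (part2 T c d a b (aux_flip_reverse hf)).2 hTflag

end PachnerSpheres
end

section
/- Let B be a stacked 3-ball and let t be an interior triangle of B (a triangle contained in two tetrahedra of B). Then the induced subcomplex B[V(B) \ t] on the vertices of B not lying in t has exactly two connected components. Moreover, if u and v are the apices of the two tetrahedra of B containing t, then u and v lie in different components of B[V(B) \ t]. -/
namespace PachnerSpheres

open Finset

variable {n : ℕ}

/-! Induction along the stacking order. The tetrahedron `insert x s` glued last has one fresh
vertex `x`, all of whose neighbours lie in `s`, a face of an older tetrahedron `σ`. Hence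
paths through `x` can be rerouted inside `σ`, and `x` merely joins the component of a vertex
of `s \ t`. The only new separation happens when `t = s`: then `x` is isolated in `B[V ∖ t]`,
while every other vertex reaches the old apex of `s`, because deleting at most two vertices
never disconnects a stacked ball. -/

section InducedReach

variable {B B' : Finset (Finset (Fin n))} {t e : Finset (Fin n)} {a b : Fin n}

theorem inducedReach_mono (hBB : B ⊆ B') (h : inducedReach B t a b) :
    inducedReach B' t a b :=
  Relation.ReflTransGen.mono
    (fun _ _ ⟨hpq, hp, hq, τ, hτ, hpτ, hqτ⟩ => ⟨hpq, hp, hq, τ, hBB hτ, hpτ, hqτ⟩) _ _ h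

theorem inducedReach_of_inter_subset (hte : ∀ τ ∈ B, τ ∩ t ⊆ e)
    (h : inducedReach B e a b) : inducedReach B t a b :=
  Relation.ReflTransGen.mono (fun _ _ ⟨hpq, hp, hq, τ, hτ, hpτ, hqτ⟩ =>
    ⟨hpq, fun hpt => hp (hte τ hτ (mem_inter.mpr ⟨hpτ, hpt⟩)),
      fun hqt => hq (hte τ hτ (mem_inter.mpr ⟨hqτ, hqt⟩)), τ, hτ, hpτ, hqτ⟩) _ _ h

theorem inducedReach_symm (h : inducedReach B t a b) : inducedReach B t b a :=
  have : Std.Symm fun p q : Fin n => p ≠ q ∧ p ∉ t ∧ q ∉ t ∧ ∃ τ ∈ B, p ∈ τ ∧ q ∈ τ :=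
    ⟨fun _ _ ⟨hpq, hp, hq, τ, hτ, hpτ, hqτ⟩ => ⟨hpq.symm, hq, hp, τ, hτ, hqτ, hpτ⟩⟩
  Relation.ReflTransGen.stdSymm.symm _ _ h

end InducedReach

section Glue

variable {B : Finset (Finset (Fin n))} {σ s t : Finset (Fin n)} {x : Fin n}

theorem exists_mem_of_mem_glue (hσ : σ ∈ B) (hsσ : s ⊆ σ) {w : Fin n}
    (hw : ∃ τ ∈ insert (insert x s) B, w ∈ τ) (hwx : w ≠ x) : ∃ τ ∈ B, w ∈ τ := by
  obtain ⟨τ, hτ, hwτ⟩ := hw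
  rcases mem_insert.mp hτ with rfl | hτB
  · exact ⟨σ, hσ, hsσ ((mem_insert.mp hwτ).resolve_left hwx)⟩
  · exact ⟨τ, hτB, hwτ⟩

theorem exists_inducedReach_of_glue (hσ : σ ∈ B) (hsσ : s ⊆ σ) (hx : ∀ τ ∈ B, x ∉ τ)
    (hst : (s \ t).Nonempty) {c : Fin n} (hct : c ∉ t)
    (hc : ∃ τ ∈ insert (insert x s) B, c ∈ τ) :
    ∃ c', c' ∉ t ∧ (∃ τ ∈ B, c' ∈ τ) ∧ inducedReach (insert (insert x s) B) t c c' := by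
  rcases eq_or_ne c x with rfl | hcx
  · obtain ⟨y, hy⟩ := hst
    obtain ⟨hys, hyt⟩ := mem_sdiff.mp hy
    have hcy : c ≠ y := by
      rintro rfl
      exact hx σ hσ (hsσ hys)
    exact ⟨_, hyt, ⟨σ, hσ, hsσ hys⟩, .single ⟨hcy, hct, hyt, _, mem_insert_self _ _,
      mem_insert_self _ _, mem_insert_of_mem hys⟩⟩
  · exact ⟨c, hct, exists_mem_of_mem_glue hσ hsσ hc hcx, .refl⟩

/-- Sending `x` to a vertex `y ∈ s \ t` maps paths of the glued ball to paths of `B`. -/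
theorem inducedReach_of_glue (hσ : σ ∈ B) (hsσ : s ⊆ σ) (hx : ∀ τ ∈ B, x ∉ τ)
    (hst : (s \ t).Nonempty) {a b : Fin n} (hax : a ≠ x) (hbx : b ≠ x)
    (h : inducedReach (insert (insert x s) B) t a b) : inducedReach B t a b := by
  obtain ⟨y, hy⟩ := hst
  obtain ⟨hys, hyt⟩ := mem_sdiff.mp hy
  let f : Fin n → Fin n := fun z => if z = x then y else z
  have hft : ∀ z, z ∉ t → f z ∉ t := fun z hz => by
    simp only [f]
    split_ifs <;> assumption
  have hfσ : ∀ z ∈ insert x s, f z ∈ σ := fun z hz => by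
    simp only [f]
    split_ifs with hzx
    · exact hsσ hys
    · exact hsσ ((mem_insert.mp hz).resolve_left hzx)
  have hf : ∀ z, z ≠ x → f z = z := fun z hzx => if_neg hzx
  rw [← hf a hax, ← hf b hbx]
  refine Relation.ReflTransGen.lift' f (fun p q ⟨_, hpt, hqt, τ, hτ, hpτ, hqτ⟩ => ?_) _ _ h
  change inducedReach B t (f p) (f q)
  by_cases hfpq : f p = f q
  · exact hfpq ▸ .refl
  refine .single ⟨hfpq, hft p hpt, hft q hqt, ?_⟩
  rcases mem_insert.mp hτ with rfl | hτB
  · exact ⟨σ, hσ, hfσ p hpτ, hfσ q hqτ⟩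
  · rw [hf p fun hpx => hx τ hτB (hpx ▸ hpτ), hf q fun hqx => hx τ hτB (hqx ▸ hqτ)]
    exact ⟨τ, hτB, hpτ, hqτ⟩

theorem eq_of_inducedReach_glue_self (hx : ∀ τ ∈ B, x ∉ τ) {w : Fin n}
    (h : inducedReach (insert (insert x t) B) t x w) : w = x := by
  rcases Relation.ReflTransGen.cases_head h with rfl | ⟨c, ⟨hxc, -, hct, τ, hτ, hxτ, hcτ⟩, -⟩
  · rfl
  rcases mem_insert.mp hτ with rfl | hτB
  · exact absurd ((mem_insert.mp hcτ).resolve_left hxc.symm) hct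
  · exact absurd hxτ (hx τ hτB)

end Glue

namespace IsStackedBall

variable {B : Finset (Finset (Fin n))}

theorem card_eq_four (hB : IsStackedBall B) : ∀ τ ∈ B, τ.card = 4 := by
  induction hB with
  | single τ hτ => simpa using hτ
  | glue B s x _ hs hbd hx ih =>
    obtain ⟨σ, hσ, hsσ⟩ := filter_nonempty_iff.mp (card_pos.mp (hbd ▸ Nat.one_pos))
    intro τ hτ
    rcases mem_insert.mp hτ with rfl | hτB
    · rw [card_insert_of_notMem fun hxs => hx σ hσ (hsσ hxs), hs]
    · exact ih τ hτB

theorem inducedReach_of_card_le_two (hB : IsStackedBall B) {e : Finset (Fin n)}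
    (he : e.card ≤ 2) {a b : Fin n} (hae : a ∉ e) (hbe : b ∉ e) (ha : ∃ τ ∈ B, a ∈ τ)
    (hb : ∃ τ ∈ B, b ∈ τ) : inducedReach B e a b := by
  induction hB generalizing a b with
  | single τ _ =>
    simp only [mem_singleton, exists_eq_left] at ha hb
    rcases eq_or_ne a b with rfl | hab
    · exact .refl
    · exact .single ⟨hab, hae, hbe, τ, mem_singleton_self τ, ha, hb⟩
  | glue B s x _ hs hbd hx ih =>
    obtain ⟨σ, hσ, hsσ⟩ := filter_nonempty_iff.mp (card_pos.mp (hbd ▸ Nat.one_pos))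
    have hse : (s \ e).Nonempty := by
      rw [← card_pos]
      have := le_card_sdiff e s
      omega
    obtain ⟨a', ha'e, ha', haa'⟩ := exists_inducedReach_of_glue hσ hsσ hx hse hae ha
    obtain ⟨b', hb'e, hb', hbb'⟩ := exists_inducedReach_of_glue hσ hsσ hx hse hbe hb
    exact (haa'.trans (inducedReach_mono (subset_insert _ _) (ih ha'e hb'e ha' hb'))).trans
      (inducedReach_symm hbb')

theorem exists_apex_inducedReach (hB : IsStackedBall B) {t : Finset (Fin n)}
    (ht : t.card = 3) {v : Fin n} (hvt : v ∉ t) (hv : insert v t ∈ B) {w : Fin n}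
    (hwt : w ∉ t) (hw : ∃ τ ∈ B, w ∈ τ) :
    ∃ a, a ∉ t ∧ insert a t ∈ B ∧ inducedReach B t w a := by
  induction hB generalizing v w with
  | single τ _ =>
    rw [mem_singleton] at hv
    simp only [mem_singleton, exists_eq_left, ← hv, mem_insert] at hw
    obtain rfl := hw.resolve_right hwt
    exact ⟨w, hwt, hv ▸ mem_singleton_self τ, .refl⟩
  | glue B s x hB hs hbd hx ih =>
    obtain ⟨σ, hσ, hsσ⟩ := filter_nonempty_iff.mp (card_pos.mp (hbd ▸ Nat.one_pos))
    by_cases hxt : x ∈ t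
    · -- `t` lies only in the new tetrahedron, and `B[V ∖ t] = B[V ∖ (t.erase x)]`.
      have hvs : insert v t = insert x s :=
        (mem_insert.mp hv).resolve_right fun h => hx _ h (mem_insert_of_mem hxt)
      have hvx : v ≠ x := fun h => hvt (h ▸ hxt)
      have hvB : ∃ τ ∈ B, v ∈ τ :=
        exists_mem_of_mem_glue hσ hsσ ⟨_, mem_insert_self _ _, hvs ▸ mem_insert_self v t⟩ hvx
      have hwB := exists_mem_of_mem_glue hσ hsσ hw fun h => hwt (h ▸ hxt)
      have hreach := hB.inducedReach_of_card_le_two (e := t.erase x)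
        (by rw [card_erase_of_mem hxt, ht]) (fun h => hwt (mem_of_mem_erase h))
        (fun h => hvt (mem_of_mem_erase h)) hwB hvB
      refine ⟨v, hvt, hv, inducedReach_mono (subset_insert _ _)
        (inducedReach_of_inter_subset (fun τ hτ z hz => ?_) hreach)⟩
      obtain ⟨hzτ, hzt⟩ := mem_inter.mp hz
      exact mem_erase.mpr ⟨fun h => hx τ hτ (h ▸ hzτ), hzt⟩
    by_cases hts : t = s
    · subst hts
      rcases eq_or_ne w x with rfl | hwx
      · exact ⟨w, hxt, mem_insert_self _ _, .refl⟩
      obtain ⟨a, hat, rfl⟩ := exists_eq_insert_iff.mpr ⟨hsσ, by rw [ht, hB.card_eq_four _ hσ]⟩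
      obtain ⟨b, hbt, hbB, hwb⟩ := ih hat hσ hwt (exists_mem_of_mem_glue hσ hsσ hw hwx)
      exact ⟨b, hbt, mem_insert_of_mem hbB, inducedReach_mono (subset_insert _ _) hwb⟩
    · have hvB : insert v t ∈ B := (mem_insert.mp hv).resolve_left fun h =>
        hts (eq_of_subset_of_card_le ((subset_insert_iff_of_notMem hxt).mp
          (h ▸ subset_insert v t)) (by rw [ht, hs]))
      have hst : (s \ t).Nonempty :=
        sdiff_nonempty.mpr fun h => hts (eq_of_subset_of_card_le h (by rw [ht, hs])).symm
      obtain ⟨w', hw't, hw', hww'⟩ := exists_inducedReach_of_glue hσ hsσ hx hst hwt hw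
      obtain ⟨a, hat, haB, hw'a⟩ := ih hvt hvB hw't hw'
      exact ⟨a, hat, mem_insert_of_mem haB, hww'.trans (inducedReach_mono (subset_insert _ _) hw'a)⟩

theorem not_inducedReach_apices (hB : IsStackedBall B) {t : Finset (Fin n)} (ht : t.card = 3)
    {u v : Fin n} (hut : u ∉ t) (hvt : v ∉ t) (huv : u ≠ v) (hu : insert u t ∈ B)
    (hv : insert v t ∈ B) : ¬ inducedReach B t u v := by
  induction hB generalizing u v with
  | single τ _ =>
    rw [mem_singleton] at hu hv
    exact absurd ((insert_inj hut).mp (hu.trans hv.symm)) huv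
  | glue B s x hB hs hbd hx ih =>
    obtain ⟨σ, hσ, hsσ⟩ := filter_nonempty_iff.mp (card_pos.mp (hbd ▸ Nat.one_pos))
    by_cases hxt : x ∈ t
    · have hnew : ∀ a, insert a t ∈ insert (insert x s) B → insert a t = insert x s :=
        fun a ha => (mem_insert.mp ha).resolve_right fun h => hx _ h (mem_insert_of_mem hxt)
      exact absurd ((insert_inj hut).mp ((hnew u hu).trans (hnew v hv).symm)) huv
    by_cases hts : t = s
    · subst hts
      rcases eq_or_ne u x with rfl | hux
      · exact fun h => huv (eq_of_inducedReach_glue_self hx h).symm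
      rcases eq_or_ne v x with rfl | hvx
      · exact fun h => huv (eq_of_inducedReach_glue_self hx (inducedReach_symm h))
      -- otherwise `t` would lie in two tetrahedra of `B`
      have hold : ∀ a, a ∉ t → a ≠ x → insert a t ∈ insert (insert x t) B →
          insert a t ∈ B.filter fun τ => t ⊆ τ := fun a hat hax ha =>
        mem_filter.mpr ⟨(mem_insert.mp ha).resolve_left fun h => hax ((insert_inj hat).mp h),
          subset_insert a t⟩
      exact absurd ((insert_inj hut).mp (card_le_one.mp hbd.le _ (hold u hut hux hu) _
        (hold v hvt hvx hv))) huv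
    have hold : ∀ a, insert a t ∈ insert (insert x s) B → insert a t ∈ B := fun a ha =>
      (mem_insert.mp ha).resolve_left fun h =>
        hts (eq_of_subset_of_card_le ((subset_insert_iff_of_notMem hxt).mp
          (h ▸ subset_insert a t)) (by rw [ht, hs]))
    have hst : (s \ t).Nonempty :=
      sdiff_nonempty.mpr fun h => hts (eq_of_subset_of_card_le h (by rw [ht, hs])).symm
    have hne : ∀ a, insert a t ∈ B → a ≠ x := fun a ha hax => hx _ ha (hax ▸ mem_insert_self a t)
    exact fun h => ih hut hvt huv (hold u hu) (hold v hv) <|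
      inducedReach_of_glue hσ hsσ hx hst (hne u (hold u hu)) (hne v (hold v hv)) h

end IsStackedBall

/-- If `t` is an interior triangle of a stacked 3-ball `B`,
then the subcomplex of `B` induced on the vertices outside `t` has exactly two
connected components, and the apices `u`, `v` of the two tetrahedra of `B`
containing `t` lie in different components. -/
theorem stacked_ball_interior_triangle_separates (n : ℕ)
    (B : Finset (Finset (Fin n))) (hB : IsStackedBall B)
    (t : Finset (Fin n)) (ht : t.card = 3)
    (hint : (B.filter fun τ => t ⊆ τ).card = 2)
    (u v : Fin n) (hu : u ∉ t) (hv : v ∉ t) (huv : u ≠ v)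
    (hut : insert u t ∈ B) (hvt : insert v t ∈ B) :
    ¬ inducedReach B t u v ∧
      ∀ w : Fin n, w ∉ t → (∃ τ ∈ B, w ∈ τ) →
        inducedReach B t w u ∨ inducedReach B t w v := by
  refine ⟨hB.not_inducedReach_apices ht hu hv huv hut hvt, fun w hwt hw => ?_⟩
  obtain ⟨a, hat, ha, hwa⟩ := hB.exists_apex_inducedReach ht hu hut hwt hw
  have hapices : (B.filter fun τ => t ⊆ τ) = {insert u t, insert v t} :=
    (eq_of_subset_of_card_le
      (insert_subset_iff.mpr ⟨mem_filter.mpr ⟨hut, subset_insert u t⟩,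
        singleton_subset_iff.mpr (mem_filter.mpr ⟨hvt, subset_insert v t⟩)⟩)
      (by rw [hint, card_pair ((insert_inj hu).not.mpr huv)])).symm
  have hat' : insert a t ∈ ({insert u t, insert v t} : Finset (Finset (Fin n))) :=
    hapices ▸ mem_filter.mpr ⟨ha, subset_insert a t⟩
  rcases mem_insert.mp hat' with h | h
  · exact .inl ((insert_inj hat).mp h ▸ hwa)
  · exact .inr ((insert_inj hat).mp (mem_singleton.mp h) ▸ hwa)

end PachnerSpheres
end

section
/- Let S be a stacked 2-sphere with edge graph G, and let S̄ denote the simplicial complex whose faces are all the cliques of G. Then S̄ is a stacked 3-ball with boundary ∂S̄ = S. Moreover, up to simplicial isomorphism, S̄ is the unique stacked 3-ball whose boundary is S. -/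
namespace PachnerSpheres

open Finset

variable {n : ℕ}

-- auxiliary lemmas to insert
section Aux

lemma mem_bdry {B : Finset (Finset (Fin n))} {s : Finset (Fin n)} :
    s ∈ bdry B ↔ (∃ τ ∈ B, s ⊆ τ ∧ s.card = 3) ∧
      (B.filter fun τ => s ⊆ τ).card = 1 := by
  simp [bdry, Finset.mem_powersetCard]

lemma card4 {B : Finset (Finset (Fin n))} (hB : IsStackedBall B) :
    ∀ τ ∈ B, τ.card = 4 := by
  induction hB with
  | single t ht => intro τ hτ; rw [Finset.mem_singleton] at hτ; rwa [hτ]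
  | glue B t x hB ht hbd hx ih =>
      intro τ hτ
      obtain ⟨τ₀, hτ₀⟩ := Finset.card_eq_one.1 hbd
      have hτ₀B : τ₀ ∈ B ∧ t ⊆ τ₀ := by
        have : τ₀ ∈ B.filter fun τ => t ⊆ τ := by rw [hτ₀]; exact Finset.mem_singleton_self _
        simpa using this
      have hxt : x ∉ t := fun h => hx τ₀ hτ₀B.1 (hτ₀B.2 h)
      rcases Finset.mem_insert.1 hτ with h | h
      · rw [h, Finset.card_insert_of_notMem hxt, ht]
      · exact ih τ h

lemma stacked_nonempty {B : Finset (Finset (Fin n))} (hB : IsStackedBall B) :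
    B.Nonempty := by
  induction hB with
  | single t ht => exact Finset.singleton_nonempty t
  | glue B t x hB ht hbd hx ih => exact Finset.insert_nonempty _ _

/-- The three new triangles are boundary triangles of the glued ball. -/
lemma new_tri_mem_bdry {B : Finset (Finset (Fin n))} {t e : Finset (Fin n)} {x : Fin n}
    (ht : t.card = 3) (hbd : (B.filter fun τ => t ⊆ τ).card = 1)
    (hx : ∀ τ ∈ B, x ∉ τ) (het : e ⊆ t) (hec : e.card = 2) :
    insert x e ∈ bdry (insert (insert x t) B) := by
  obtain ⟨τ₀, hτ₀⟩ := Finset.card_eq_one.1 hbd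
  have hτ₀B : τ₀ ∈ B ∧ t ⊆ τ₀ := by
    have : τ₀ ∈ B.filter fun τ => t ⊆ τ := by rw [hτ₀]; exact Finset.mem_singleton_self _
    simpa using this
  have hxt : x ∉ t := fun h => hx τ₀ hτ₀B.1 (hτ₀B.2 h)
  have hxe : x ∉ e := fun h => hxt (het h)
  have hsub : insert x e ⊆ insert x t := Finset.insert_subset_insert _ het
  have hcard : (insert x e).card = 3 := by
    rw [Finset.card_insert_of_notMem hxe, hec]
  have hfilt : B.filter (fun τ => insert x e ⊆ τ) = ∅ := by
    rw [Finset.filter_eq_empty_iff]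
    intro τ hτ hsub'
    exact hx τ hτ (hsub' (Finset.mem_insert_self _ _))
  rw [mem_bdry]
  refine ⟨⟨insert x t, Finset.mem_insert_self _ _, hsub, hcard⟩, ?_⟩
  have hTB : insert x t ∉ B := fun h => hx _ h (Finset.mem_insert_self _ _)
  rw [Finset.filter_insert, if_pos hsub, hfilt]
  simp

/-- Old boundary triangles other than `t` stay boundary triangles. -/
lemma old_tri_mem_bdry {B : Finset (Finset (Fin n))} {t s : Finset (Fin n)} {x : Fin n}
    (ht : t.card = 3) (hx : ∀ τ ∈ B, x ∉ τ)
    (hs : s ∈ bdry B) (hst : s ≠ t) :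
    s ∈ bdry (insert (insert x t) B) := by
  rw [mem_bdry] at hs ⊢
  obtain ⟨⟨τ, hτB, hsτ, hcard⟩, hcount⟩ := hs
  have hxs : x ∉ s := fun h => hx τ hτB (hsτ h)
  have hnsub : ¬ s ⊆ insert x t := by
    intro hsub
    apply hst
    have hst' : s ⊆ t := fun v hv => by
      rcases Finset.mem_insert.1 (hsub hv) with h | h
      · exact absurd (h ▸ hv) hxs
      · exact h
    exact Finset.eq_of_subset_of_card_le hst' (by rw [hcard, ht])
  refine ⟨⟨τ, Finset.mem_insert_of_mem hτB, hsτ, hcard⟩, ?_⟩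
  rw [Finset.filter_insert, if_neg hnsub]
  exact hcount

/-- Every edge of a tetrahedron of a stacked ball is a boundary edge, and
conversely. -/
lemma edges_stacked {B : Finset (Finset (Fin n))} (hB : IsStackedBall B) :
    (bdry B).biUnion (fun s => s.powersetCard 2) =
      B.biUnion (fun τ => τ.powersetCard 2) := by
  apply Finset.Subset.antisymm
  · intro e he
    obtain ⟨s, hs, hes⟩ := Finset.mem_biUnion.1 he
    obtain ⟨⟨τ, hτB, hsτ, _⟩, _⟩ := mem_bdry.1 hs
    rw [Finset.mem_powersetCard] at hes
    exact Finset.mem_biUnion.2 ⟨τ, hτB,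
      Finset.mem_powersetCard.2 ⟨hes.1.trans hsτ, hes.2⟩⟩
  · induction hB with
    | single t ht =>
        intro e he
        obtain ⟨τ, hτ, heτ⟩ := Finset.mem_biUnion.1 he
        rw [Finset.mem_singleton] at hτ
        subst hτ
        rw [Finset.mem_powersetCard] at heτ
        obtain ⟨s, hes, hst, hsc⟩ :=
          Finset.exists_subsuperset_card_eq (n := 3) heτ.1 (by omega) (by omega)
        refine Finset.mem_biUnion.2 ⟨s, ?_, Finset.mem_powersetCard.2 ⟨hes, heτ.2⟩⟩
        rw [mem_bdry]
        refine ⟨⟨τ, Finset.mem_singleton_self _, hst, hsc⟩, ?_⟩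
        rw [Finset.filter_singleton, if_pos hst]
        simp
    | glue B t x hB ht hbd hx ih =>
        intro e he
        obtain ⟨τ, hτ, heτ⟩ := Finset.mem_biUnion.1 he
        rw [Finset.mem_powersetCard] at heτ
        obtain ⟨heτ1, heτ2⟩ := heτ
        rcases Finset.mem_insert.1 hτ with hT | hτB
        · subst hT
          by_cases hxe : x ∈ e
          · -- e = {x, v} with v ∈ t
            have hcv : (e.erase x).card = 1 := by
              rw [Finset.card_erase_of_mem hxe, heτ2]
            obtain ⟨v, hv⟩ := Finset.card_eq_one.1 hcv
            have hve : v ∈ e := Finset.erase_subset _ _ (hv ▸ Finset.mem_singleton_self v)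
            have hvx : v ≠ x := by
              have : v ∈ e.erase x := hv ▸ Finset.mem_singleton_self v
              exact Finset.ne_of_mem_erase this
            have hvt : v ∈ t := by
              rcases Finset.mem_insert.1 (heτ1 hve) with h | h
              · exact absurd h hvx
              · exact h
            obtain ⟨e', hve', he't, he'c⟩ :=
              Finset.exists_subsuperset_card_eq (n := 2)
                (Finset.singleton_subset_iff.2 hvt) (by simp) (by omega)
            have hmem := new_tri_mem_bdry (B := B) ht hbd hx he't he'c
            refine Finset.mem_biUnion.2 ⟨insert x e', hmem,
              Finset.mem_powersetCard.2 ⟨?_, heτ2⟩⟩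
            intro w hw
            by_cases hwx : w = x
            · exact hwx ▸ Finset.mem_insert_self _ _
            · have : w ∈ e.erase x := Finset.mem_erase.2 ⟨hwx, hw⟩
              rw [hv, Finset.mem_singleton] at this
              exact Finset.mem_insert_of_mem (this ▸ hve' (Finset.mem_singleton_self v))
          · -- e ⊆ t
            have het : e ⊆ t := fun w hw => by
              rcases Finset.mem_insert.1 (heτ1 hw) with h | h
              · exact absurd (h ▸ hw) hxe
              · exact h
            have hmem := new_tri_mem_bdry (B := B) ht hbd hx het heτ2
            exact Finset.mem_biUnion.2 ⟨insert x e, hmem,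
              Finset.mem_powersetCard.2 ⟨Finset.subset_insert _ _, heτ2⟩⟩
        · -- τ ∈ B : use induction hypothesis
          have := ih (Finset.mem_biUnion.2 ⟨τ, hτB,
            Finset.mem_powersetCard.2 ⟨heτ1, heτ2⟩⟩)
          obtain ⟨s, hs, hes⟩ := Finset.mem_biUnion.1 this
          rw [Finset.mem_powersetCard] at hes
          by_cases hst : s = t
          · subst hst
            have hmem := new_tri_mem_bdry (B := B) ht hbd hx hes.1 hes.2
            exact Finset.mem_biUnion.2 ⟨insert x e, hmem,
              Finset.mem_powersetCard.2 ⟨Finset.subset_insert _ _, hes.2⟩⟩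
          · exact Finset.mem_biUnion.2 ⟨s, old_tri_mem_bdry ht hx hs hst,
              Finset.mem_powersetCard.2 hes⟩

/-- Every clique (of size ≥ 2) of the tetrahedral "edge graph" of a stacked
ball is contained in a tetrahedron. -/
lemma clique_sub {B : Finset (Finset (Fin n))} (hB : IsStackedBall B) :
    ∀ s : Finset (Fin n), 2 ≤ s.card →
      (∀ u ∈ s, ∀ v ∈ s, u ≠ v → ∃ τ ∈ B, u ∈ τ ∧ v ∈ τ) →
      ∃ τ ∈ B, s ⊆ τ := by
  induction hB with
  | single t ht =>
      intro s hcard hcl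
      refine ⟨t, Finset.mem_singleton_self t, fun u hu => ?_⟩
      obtain ⟨v, hv, hne⟩ := Finset.exists_mem_ne (s := s) (by omega) u
      obtain ⟨τ, hτ, hu', _⟩ := hcl u hu v hv hne.symm
      rw [Finset.mem_singleton] at hτ
      exact hτ ▸ hu'
  | glue B t x hB ht hbd hx ih =>
      intro s hcard hcl
      obtain ⟨τ₀, hτ₀⟩ := Finset.card_eq_one.1 hbd
      have hτ₀B : τ₀ ∈ B ∧ t ⊆ τ₀ := by
        have : τ₀ ∈ B.filter fun τ => t ⊆ τ := by rw [hτ₀]; exact Finset.mem_singleton_self _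
        simpa using this
      by_cases hxs : x ∈ s
      · refine ⟨insert x t, Finset.mem_insert_self _ _, fun u hu => ?_⟩
        by_cases hux : u = x
        · exact hux ▸ Finset.mem_insert_self _ _
        · obtain ⟨τ, hτ, hxτ, huτ⟩ := hcl x hxs u hu (fun h => hux h.symm)
          rcases Finset.mem_insert.1 hτ with h | h
          · exact h ▸ huτ
          · exact absurd hxτ (hx τ h)
      · obtain ⟨τ, hτ, hsub⟩ := ih s hcard (fun u hu v hv hne => by
          obtain ⟨τ, hτ, hu', hv'⟩ := hcl u hu v hv hne
          rcases Finset.mem_insert.1 hτ with h | h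
          · subst h
            have hut : u ∈ t := by
              rcases Finset.mem_insert.1 hu' with h | h
              · exact absurd (h ▸ hu) hxs
              · exact h
            have hvt : v ∈ t := by
              rcases Finset.mem_insert.1 hv' with h | h
              · exact absurd (h ▸ hv) hxs
              · exact h
            exact ⟨τ₀, hτ₀B.1, hτ₀B.2 hut, hτ₀B.2 hvt⟩
          · exact ⟨τ, h, hu', hv'⟩)
        exact ⟨τ, Finset.mem_insert_of_mem hτ, hsub⟩

lemma hasEdge_iff {B : Finset (Finset (Fin n))} (S : Sphere2 n)
    (hB : IsStackedBall B) (hf : S.faces = bdry B) (u v : Fin n) :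
    S.HasEdge u v ↔ u ≠ v ∧ ∃ τ ∈ B, u ∈ τ ∧ v ∈ τ := by
  unfold Sphere2.HasEdge Sphere2.edges
  rw [hf, edges_stacked hB]
  constructor
  · rintro ⟨hne, h⟩
    obtain ⟨τ, hτ, hm⟩ := Finset.mem_biUnion.1 h
    rw [Finset.mem_powersetCard] at hm
    exact ⟨hne, τ, hτ, hm.1 (by simp), hm.1 (by simp)⟩
  · rintro ⟨hne, τ, hτ, hu, hv⟩
    refine ⟨hne, Finset.mem_biUnion.2 ⟨τ, hτ, Finset.mem_powersetCard.2
      ⟨Finset.insert_subset hu (Finset.singleton_subset_iff.2 hv), Finset.card_pair hne⟩⟩⟩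

lemma cliqueTets_eq {B : Finset (Finset (Fin n))} (S : Sphere2 n)
    (hB : IsStackedBall B) (hf : S.faces = bdry B) : cliqueTets S = B := by
  ext τ
  simp only [cliqueTets, Finset.mem_filter, Finset.mem_powersetCard,
    Finset.subset_univ, true_and]
  constructor
  · rintro ⟨hc, hcl⟩
    obtain ⟨τ', hτ', hsub⟩ := clique_sub hB τ (by omega)
      (fun u hu v hv hne => ((hasEdge_iff S hB hf u v).1 (hcl u hu v hv hne)).2)
    have hc' := card4 hB τ' hτ'
    have : τ = τ' := Finset.eq_of_subset_of_card_le hsub (by omega)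
    exact this ▸ hτ'
  · intro hτ
    exact ⟨card4 hB τ hτ, fun u hu v hv hne =>
      (hasEdge_iff S hB hf u v).2 ⟨hne, τ, hτ, hu, hv⟩⟩

end Aux

/-- For a stacked 2-sphere `S`, the clique complex `S̄` of its
edge graph is a stacked 3-ball (pure: all cliques lie in 4-cliques) with
boundary `∂S̄ = S`, and `S̄` is the unique stacked 3-ball with boundary `S`, up
to simplicial isomorphism. -/
theorem stacked_sphere_unique_stacked_ball (n : ℕ) (S : Sphere2 n)
    (hS : IsStacked S) :
    IsStackedBall (cliqueTets S) ∧
    bdry (cliqueTets S) = S.faces ∧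
    (∀ s : Finset (Fin n), (∀ u ∈ s, ∀ v ∈ s, u ≠ v → S.HasEdge u v) →
      ∃ τ ∈ cliqueTets S, s ⊆ τ) ∧
    ∀ B : Finset (Finset (Fin n)), IsStackedBall B → bdry B = S.faces →
      ∃ σ : Equiv.Perm (Fin n), B.image (Finset.image σ) = cliqueTets S := by
  obtain ⟨B₀, hB₀, hf⟩ := hS
  have hkey := cliqueTets_eq S hB₀ hf
  refine ⟨hkey ▸ hB₀, by rw [hkey, ← hf], ?_, ?_⟩
  · intro s hcl
    by_cases h2 : 2 ≤ s.card
    · obtain ⟨τ, hτ, hsub⟩ := clique_sub hB₀ s h2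
        (fun u hu v hv hne => ((hasEdge_iff S hB₀ hf u v).1 (hcl u hu v hv hne)).2)
      exact ⟨τ, hkey ▸ hτ, hsub⟩
    · by_cases hs : s = ∅
      · obtain ⟨τ, hτ⟩ := stacked_nonempty hB₀
        exact ⟨τ, hkey ▸ hτ, by simp [hs]⟩
      · have h1 : s.card = 1 := by
          have := Finset.card_pos.2 (Finset.nonempty_of_ne_empty hs)
          omega
        obtain ⟨a, ha⟩ := Finset.card_eq_one.1 h1
        obtain ⟨f, hfS, haf⟩ := S.covers a
        rw [hf, mem_bdry] at hfS
        obtain ⟨⟨τ, hτB, hfτ, _⟩, _⟩ := hfS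
        exact ⟨τ, hkey ▸ hτB, by
          rw [ha, Finset.singleton_subset_iff]; exact hfτ haf⟩
  · intro B hB hbdB
    have h := cliqueTets_eq S hB hbdB.symm
    refine ⟨Equiv.refl _, ?_⟩
    have : B.image (Finset.image ⇑(Equiv.refl (Fin n))) = B := by
      rw [Equiv.coe_refl,
        show Finset.image (id : Fin n → Fin n) = id from funext fun s => Finset.image_id]
      exact Finset.image_id
    rw [this]
    exact h.symm


end PachnerSpheres
end
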